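/- arXiv:1811.04690 — 6 statements merged into one kernel-verified Lean document; each statement's English description precedes it below -/
import Mathlib

section
/- Let G = (S, 𝓕) be a local poset greedoid. Then the following three conditions are equivalent: (i) G satisfies the local forest property (i.e., G is a local forest greedoid); (ii) every path in G has a unique feasible ordering; (iii) whenever (a_1, a_2, …, a_k) is the feasible ordering of a path, the set {a_1, a_2, …, a_i} is also a path for every 1 ≤ i ≤ k. -/
/-!
(i) ⇒ (ii): if two feasible orderings of the `z`-path `P` first differ after a common prefix `c`,
then `c`, `c + x`, `c + y` and (by the local union property) `c + x + y` form a diamond of feasible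
subsets of `P`. Augmenting its top inside `P` and applying the local forest property yields a
diamond one level higher, until one of its sides is a proper feasible subset of `P` containing `z`,
against the minimality of `P`.

(ii) ⇒ (iii): extend a feasible ordering of the path of the last element `a` of a prefix to one of
`P`; by uniqueness it is the given ordering, and minimality forces that path to be the prefix.

(iii) ⇒ (i): let `P` be the `z`-path in `A + x + y + z`; `z` is last in any feasible ordering of
`P`. If `x` (or `y`) does not occur before it, the local union property adds `z` to `A + y`
(or `A + x`). If both occur, the prefix ending at the later one is a path ending there, and the
local intersection property puts it inside `A + y` (or `A + x`), which only happens in the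
degenerate cases `x ∈ A + y` or `y ∈ A + x`.
-/

open Finset

variable {α : Type*} [DecidableEq α] [Fintype α]

/-- `X` is subfeasible: contained in some feasible set. -/
def Subfeasible (F : Set (Finset α)) (X : Finset α) : Prop :=
  ∃ Y ∈ F, X ⊆ Y

/-- Greedoid axioms: `∅` is feasible, and the exchange property. -/
def IsGreedoid (F : Set (Finset α)) : Prop :=
  (∅ : Finset α) ∈ F ∧
    ∀ X ∈ F, ∀ Y ∈ F, X.card < Y.card → ∃ y ∈ Y, y ∉ X ∧ insert y X ∈ F

/-- Local union property. -/
def LocalUnion (F : Set (Finset α)) : Prop :=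
  ∀ A ∈ F, ∀ B ∈ F, Subfeasible F (A ∪ B) → A ∪ B ∈ F

/-- Local intersection property. -/
def LocalInter (F : Set (Finset α)) : Prop :=
  ∀ A ∈ F, ∀ B ∈ F, Subfeasible F (A ∪ B) → A ∩ B ∈ F

/-- Local forest property. -/
def LocalForest (F : Set (Finset α)) : Prop :=
  ∀ A ∈ F, ∀ x y z : α,
    insert x A ∈ F → insert y A ∈ F → insert x (insert y A) ∈ F →
      insert z (insert x (insert y A)) ∈ F →
      insert z (insert x A) ∈ F ∨ insert z (insert y A) ∈ F

/-- The rank function of a greedoid: max cardinality of a feasible subset. -/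
noncomputable def grank (F : Set (Finset α)) (A : Finset α) : ℕ :=
  sSup {n : ℕ | ∃ X ∈ F, X ⊆ A ∧ X.card = n}

/-- A base: a feasible set of maximum size. -/
def IsBase (F : Set (Finset α)) (B : Finset α) : Prop :=
  B ∈ F ∧ ∀ C ∈ F, C.card ≤ B.card

/-- The set of continuations of a feasible set `A`. -/
def Gamma (F : Set (Finset α)) (A : Finset α) : Set α :=
  {x | x ∉ A ∧ insert x A ∈ F}

/-- `P` is the `x`-path in `A`: the unique inclusion-minimal feasible subset
of `A` containing `x`. -/
def IsPathIn (F : Set (Finset α)) (A : Finset α) (x : α) (P : Finset α) : Prop :=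
  P ∈ F ∧ P ⊆ A ∧ x ∈ P ∧ ∀ Q ∈ F, Q ⊆ A → x ∈ Q → P ⊆ Q

/-- `P` is a path. -/
def IsPath (F : Set (Finset α)) (P : Finset α) : Prop :=
  ∃ A ∈ F, ∃ x ∈ A, IsPathIn F A x P

/-- `l` is a feasible ordering (of the set of its elements): every prefix is feasible. -/
def FeasibleOrdering (F : Set (Finset α)) (l : List α) : Prop :=
  l.Nodup ∧ ∀ i : ℕ, (l.take i).toFinset ∈ F

/-- `B` is a greedy base for maximizing `w`. -/
def GreedyMaxBase (F : Set (Finset α)) (w : Finset α → ℝ) (B : Finset α) : Prop :=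
  IsBase F B ∧ ∃ l : List α, FeasibleOrdering F l ∧ l.toFinset = B ∧
    ∀ (i : ℕ) (hi : i < l.length), ∀ y ∈ Gamma F (l.take i).toFinset,
      w (insert y (l.take i).toFinset) ≤ w (insert (l.get ⟨i, hi⟩) (l.take i).toFinset)

/-- `B` is a greedy base for minimizing `w`. -/
def GreedyMinBase (F : Set (Finset α)) (w : Finset α → ℝ) (B : Finset α) : Prop :=
  IsBase F B ∧ ∃ l : List α, FeasibleOrdering F l ∧ l.toFinset = B ∧
    ∀ (i : ℕ) (hi : i < l.length), ∀ y ∈ Gamma F (l.take i).toFinset,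
      w (insert (l.get ⟨i, hi⟩) (l.take i).toFinset) ≤ w (insert y (l.take i).toFinset)

/-- The shadow vector of a feasible set `B`: `sh_B(x) = |B| - r(B \ {x})`. -/
noncomputable def shVec (F : Set (Finset α)) (B : Finset α) : α → ℝ :=
  fun x => (B.card : ℝ) - (grank F (B.erase x) : ℝ)

theorem List.eq_of_length_eq_of_concat_prefix {β : Type*} {l₁ l₂ : List β}
    (hlen : l₁.length = l₂.length)
    (h : ∀ c x y, c ++ [x] <+: l₁ → c ++ [y] <+: l₂ → x = y) : l₁ = l₂ := by
  induction l₁ generalizing l₂ with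
  | nil => exact (List.length_eq_zero_iff.1 hlen.symm).symm
  | cons a t ih =>
    obtain _ | ⟨b, s⟩ := l₂
    · simp at hlen
    obtain rfl : a = b := h [] a b (by simp) (by simp)
    refine congrArg (a :: ·) (ih (by simpa using hlen) fun c x y hx hy => ?_)
    exact h (a :: c) x y (by simpa using hx) (by simpa using hy)

theorem List.forall_take_iff_forall_concat_prefix {β : Type*} {p : List β → Prop}
    {l : List β} : (∀ i, 1 ≤ i → i ≤ l.length → p (l.take i)) ↔
      ∀ c a, c ++ [a] <+: l → p (c ++ [a]) := by
  constructor
  · intro h c a hc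
    have hlen := hc.length_le
    rw [List.prefix_iff_eq_take] at hc
    rw [hc]
    exact h _ (by simp) hlen
  · intro h i hi hil
    obtain ⟨j, rfl⟩ : ∃ j, i = j + 1 := ⟨i - 1, by omega⟩
    have htake : l.take (j + 1) = l.take j ++ [l[j]] := by
      rw [List.take_add_one, List.getElem?_eq_getElem (by omega)]
      rfl
    rw [htake]
    exact h _ _ (htake ▸ List.take_prefix _ l)

theorem List.toFinset_subset_toFinset {β : Type*} [DecidableEq β] {l₁ l₂ : List β}
    (h : l₁ ⊆ l₂) : l₁.toFinset ⊆ l₂.toFinset :=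
  Multiset.toFinset_subset.2 (Multiset.coe_subset.2 h)

theorem List.exists_concat_prefix_of_mem {β : Type*} {l : List β} {a : β} (h : a ∈ l) :
    ∃ c, c ++ [a] <+: l := by
  obtain ⟨c, t, rfl⟩ := List.mem_iff_append.1 h
  exact ⟨c, t, by simp⟩

section

omit [Fintype α]

variable {F : Set (Finset α)}

namespace FeasibleOrdering

variable {l c : List α} {a : α}

theorem toFinset_mem (hl : FeasibleOrdering F l) : l.toFinset ∈ F := by
  simpa using hl.2 l.length

theorem of_prefix (hl : FeasibleOrdering F l) (hc : c <+: l) : FeasibleOrdering F c := by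
  refine ⟨hl.1.sublist hc.sublist, fun i => ?_⟩
  rw [List.prefix_iff_eq_take.1 hc, List.take_take]
  exact hl.2 _

theorem notMem_of_concat_prefix (hl : FeasibleOrdering F l) (hc : c ++ [a] <+: l) : a ∉ c :=
  (List.nodup_cons.1 (List.nodup_append_comm.1 (hl.1.sublist hc.sublist))).1

theorem insert_mem_of_concat_prefix (hl : FeasibleOrdering F l) (hc : c ++ [a] <+: l) :
    insert a c.toFinset ∈ F := by
  simpa using (hl.of_prefix hc).toFinset_mem

theorem concat (hl : FeasibleOrdering F l) (ha : a ∉ l) (hF : insert a l.toFinset ∈ F) :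
    FeasibleOrdering F (l ++ [a]) := by
  refine ⟨List.nodup_append_comm.2 (List.nodup_cons.2 ⟨ha, hl.1⟩), fun i => ?_⟩
  rcases le_or_gt i l.length with h | h
  · rw [List.take_append_of_le_length h]
    exact hl.2 i
  · rw [List.take_of_length_le (by simp; omega)]
    simpa using hF

end FeasibleOrdering

theorem feasibleOrdering_nil (h : ∅ ∈ F) : FeasibleOrdering F [] :=
  ⟨List.nodup_nil, fun _ => by simpa using h⟩

theorem IsGreedoid.exists_feasibleOrdering_extending (hG : IsGreedoid F) {A : Finset α}
    (hA : A ∈ F) {l : List α} (hl : FeasibleOrdering F l) (hlA : l.toFinset ⊆ A) :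
    ∃ l', FeasibleOrdering F l' ∧ l'.toFinset = A ∧ l <+: l' := by
  by_cases h : l.toFinset = A
  · exact ⟨l, hl, h, List.prefix_refl l⟩
  have hlt := Finset.card_lt_card (hlA.ssubset_of_ne h)
  obtain ⟨a, haA, hal, ha⟩ := hG.2 _ hl.toFinset_mem A hA hlt
  obtain ⟨l', hl', hl'A, hpre⟩ := hG.exists_feasibleOrdering_extending hA
    (hl.concat (mt List.mem_toFinset.2 hal) ha) (by simpa using Finset.insert_subset haA hlA)
  exact ⟨l', hl', hl'A, (List.prefix_append l [a]).trans hpre⟩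
termination_by A.card - l.length
decreasing_by
  rw [List.toFinset_card_of_nodup hl.1] at hlt
  simp only [List.length_append, List.length_singleton]
  omega

theorem LocalUnion.insert_mem_of_concat (hU : LocalUnion F) {c : List α} {z : α}
    (hl : FeasibleOrdering F (c ++ [z])) {V B : Finset α} (hV : V ∈ F) (hB : B ∈ F)
    (hVB : insert z V ⊆ B) (hcV : c.toFinset ⊆ V) : insert z V ∈ F := by
  have hun : V ∪ (c ++ [z]).toFinset = insert z V := by
    simp [Finset.union_insert, Finset.union_eq_left.2 hcV]
  exact hun ▸ hU V hV _ hl.toFinset_mem ⟨B, hB, hun ▸ hVB⟩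

theorem IsGreedoid.exists_feasibleOrdering (hG : IsGreedoid F) {A : Finset α} (hA : A ∈ F) :
    ∃ l, FeasibleOrdering F l ∧ l.toFinset = A :=
  let ⟨l, hl, hlA, _⟩ := hG.exists_feasibleOrdering_extending hA (feasibleOrdering_nil hG.1)
    (by simp)
  ⟨l, hl, hlA⟩

theorem LocalInter.exists_isPathIn (hI : LocalInter F) {A : Finset α} (hA : A ∈ F) {x : α}
    (hx : x ∈ A) : ∃ P, IsPathIn F A x P := by
  classical
  obtain ⟨P, hP, hmin⟩ := Finset.exists_min_image
    {X ∈ A.powerset | X ∈ F ∧ x ∈ X} Finset.card ⟨A, by simp [hA, hx]⟩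
  simp only [Finset.mem_filter, Finset.mem_powerset] at hP hmin
  obtain ⟨hPA, hPF, hxP⟩ := hP
  refine ⟨P, hPF, hPA, hxP, fun Q hQ hQA hxQ => ?_⟩
  have hPQ : P ∩ Q ∈ F := hI P hPF Q hQ ⟨A, hA, Finset.union_subset hPA hQA⟩
  have := Finset.eq_of_subset_of_card_le Finset.inter_subset_left
    (hmin _ ⟨Finset.inter_subset_left.trans hPA, hPQ, Finset.mem_inter.2 ⟨hxP, hxQ⟩⟩)
  exact this ▸ Finset.inter_subset_right

namespace IsPathIn

variable {A P : Finset α} {z : α}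

omit [DecidableEq α] in
theorem notMem_of_ssubset (hp : IsPathIn F A z P) {Q : Finset α} (hQ : Q ∈ F) (hQP : Q ⊂ P) :
    z ∉ Q :=
  fun hz => hQP.2 (hp.2.2.2 Q hQ (hQP.1.trans hp.2.1) hz)

theorem eq_of_feasibleOrdering_concat (hp : IsPathIn F A z P) {c : List α} {a : α}
    (hl : FeasibleOrdering F (c ++ [a])) (hlP : (c ++ [a]).toFinset = P) : a = z := by
  have hcP : c.toFinset ⊂ P := by
    rw [← hlP, Finset.ssubset_iff_of_subset (by simp)]
    exact ⟨a, by simp, by simpa using hl.notMem_of_concat_prefix (List.prefix_refl _)⟩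
  have hz := hp.2.2.1
  rw [← hlP, List.toFinset_append, Finset.mem_union] at hz
  rcases hz with hz | hz
  · exact absurd hz
      (hp.notMem_of_ssubset (hl.of_prefix (List.prefix_append c [a])).toFinset_mem hcP)
  · simpa [eq_comm] using hz

theorem subset_of_mem (hI : LocalInter F) (hp : IsPathIn F A z P) {V : Finset α} (hV : V ∈ F)
    (hPV : Subfeasible F (P ∪ V)) (hz : z ∈ V) : P ⊆ V := by
  have hPV : P ⊆ P ∩ V := hp.2.2.2 _ (hI P hp.1 V hV hPV)
    (Finset.inter_subset_left.trans hp.2.1) (Finset.mem_inter.2 ⟨hp.2.2.1, hz⟩)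
  exact hPV.trans Finset.inter_subset_right

end IsPathIn

structure IsDiamond (F : Set (Finset α)) (P D : Finset α) (a b : α) : Prop where
  bot_mem : D ∈ F
  left_mem : insert a D ∈ F
  right_mem : insert b D ∈ F
  top_mem : insert a (insert b D) ∈ F
  top_subset : insert a (insert b D) ⊆ P
  ne : a ≠ b
  left_notMem : a ∉ D
  right_notMem : b ∉ D

namespace IsDiamond

variable {P D : Finset α} {a b w : α}

theorem symm (h : IsDiamond F P D a b) : IsDiamond F P D b a where
  bot_mem := h.bot_mem
  left_mem := h.right_mem
  right_mem := h.left_mem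
  top_mem := Finset.insert_comm a b D ▸ h.top_mem
  top_subset := Finset.insert_comm a b D ▸ h.top_subset
  ne := h.ne.symm
  left_notMem := h.right_notMem
  right_notMem := h.left_notMem

theorem lift (h : IsDiamond F P D a b) (hwP : w ∈ P) (hw : w ∉ insert a (insert b D))
    (hwF : insert w (insert a (insert b D)) ∈ F) (haw : insert w (insert a D) ∈ F) :
    IsDiamond F P (insert a D) b w := by
  have htop : insert b (insert w (insert a D)) = insert w (insert a (insert b D)) := by
    rw [Finset.insert_comm b w, Finset.insert_comm b a]
  simp only [Finset.mem_insert, not_or] at hw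
  refine ⟨h.left_mem, Finset.insert_comm a b D ▸ h.top_mem, haw, htop ▸ hwF, ?_,
    Ne.symm hw.2.1, ?_, ?_⟩
  · rw [htop]
    exact Finset.insert_subset hwP h.top_subset
  · simpa [h.ne.symm] using h.right_notMem
  · simpa using ⟨hw.1, hw.2.2⟩

theorem left_ssubset (h : IsDiamond F P D a b) : insert a D ⊂ P := by
  rw [Finset.ssubset_iff_of_subset
    ((Finset.insert_subset_insert a (Finset.subset_insert b D)).trans h.top_subset)]
  exact ⟨b, h.top_subset (by simp), by simpa [h.ne.symm] using h.right_notMem⟩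

end IsDiamond

theorem IsPathIn.not_isDiamond (hG : IsGreedoid F) (hF : LocalForest F) {A P : Finset α} {z : α}
    (hp : IsPathIn F A z P) {D : Finset α} {a b : α} (h : IsDiamond F P D a b) : False := by
  have hz : z ∉ insert a (insert b D) := by
    intro hz
    have : z ∈ insert a D ∨ z ∈ insert b D := by
      simp only [Finset.mem_insert] at hz ⊢
      tauto
    rcases this with hz | hz
    · exact hp.notMem_of_ssubset h.left_mem h.left_ssubset hz
    · exact hp.notMem_of_ssubset h.right_mem h.symm.left_ssubset hz
  obtain ⟨w, hwP, hw, hwF⟩ := hG.2 _ h.top_mem P hp.1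
    (Finset.card_lt_card (h.top_subset.ssubset_of_ne fun he => hz (he ▸ hp.2.2.1)))
  have hba := Finset.insert_comm a b D
  rcases hF D h.bot_mem a b w h.left_mem h.right_mem h.top_mem hwF with haw | hbw
  · exact hp.not_isDiamond hG hF (h.lift hwP hw hwF haw)
  · exact hp.not_isDiamond hG hF (h.symm.lift hwP (hba ▸ hw) (hba ▸ hwF) hbw)
termination_by P.card - D.card
decreasing_by
  · have := Finset.card_le_card h.left_ssubset.1
    rw [Finset.card_insert_of_notMem h.left_notMem] at this ⊢
    omega
  · have := Finset.card_le_card h.symm.left_ssubset.1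
    rw [Finset.card_insert_of_notMem h.right_notMem] at this ⊢
    omega

def HasUniquePathOrderings (F : Set (Finset α)) : Prop :=
  ∀ P : Finset α, IsPath F P → ∀ l₁ l₂ : List α,
    FeasibleOrdering F l₁ → l₁.toFinset = P →
    FeasibleOrdering F l₂ → l₂.toFinset = P → l₁ = l₂

def HasPathPrefixes (F : Set (Finset α)) : Prop :=
  ∀ P : Finset α, IsPath F P → ∀ l : List α,
    FeasibleOrdering F l → l.toFinset = P →
    ∀ i : ℕ, 1 ≤ i → i ≤ l.length → IsPath F (l.take i).toFinset

theorem LocalForest.hasUniquePathOrderings (hG : IsGreedoid F) (hU : LocalUnion F)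
    (hF : LocalForest F) : HasUniquePathOrderings F := by
  rintro P ⟨A, -, z, -, hp⟩ l₁ l₂ hl₁ rfl hl₂ hl₂P
  refine List.eq_of_length_eq_of_concat_prefix ?_ fun c x y hx hy =>
    by_contra fun hxy => ?_
  · rw [← List.toFinset_card_of_nodup hl₁.1, ← List.toFinset_card_of_nodup hl₂.1, hl₂P]
  have hxP : insert x c.toFinset ⊆ l₁.toFinset := by
    simpa using List.toFinset_subset_toFinset hx.subset
  have hyP : insert y c.toFinset ⊆ l₁.toFinset := by
    simpa [hl₂P] using List.toFinset_subset_toFinset hy.subset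
  have hunion : insert x c.toFinset ∪ insert y c.toFinset = insert x (insert y c.toFinset) := by
    rw [Finset.insert_union, Finset.union_insert, Finset.union_self]
  have hxF := hl₁.insert_mem_of_concat_prefix hx
  have hyF := hl₂.insert_mem_of_concat_prefix hy
  refine hp.not_isDiamond hG hF (D := c.toFinset) (a := x) (b := y)
    { bot_mem := (hl₁.of_prefix ((List.prefix_append c [x]).trans hx)).toFinset_mem
      left_mem := hxF
      right_mem := hyF
      top_mem := hunion ▸ hU _ hxF _ hyF ⟨_, hl₁.toFinset_mem, Finset.union_subset hxP hyP⟩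
      top_subset := hunion ▸ Finset.union_subset hxP hyP
      ne := hxy
      left_notMem := by simpa using hl₁.notMem_of_concat_prefix hx
      right_notMem := by simpa using hl₂.notMem_of_concat_prefix hy }

theorem hasPathPrefixes_iff : HasPathPrefixes F ↔ ∀ l : List α, FeasibleOrdering F l →
    IsPath F l.toFinset → ∀ c a, c ++ [a] <+: l → IsPath F (c ++ [a]).toFinset := by
  simp only [HasPathPrefixes,
    List.forall_take_iff_forall_concat_prefix (p := fun l => IsPath F l.toFinset)]
  exact ⟨fun h l hl hP => h _ hP l hl rfl, fun h P hP l hl hlP => h l hl (hlP ▸ hP)⟩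

theorem HasUniquePathOrderings.isPath_of_concat_prefix (hG : IsGreedoid F) (hI : LocalInter F)
    (h : HasUniquePathOrderings F) {l c : List α} {a : α} (hl : FeasibleOrdering F l)
    (hP : IsPath F l.toFinset) (hc : c ++ [a] <+: l) : IsPath F (c ++ [a]).toFinset := by
  have hPF := hl.toFinset_mem
  have haP : a ∈ l.toFinset := List.mem_toFinset.2 (hc.subset (by simp))
  obtain ⟨Q, hQ⟩ := hI.exists_isPathIn hPF haP
  obtain ⟨lQ, hlQ, rfl⟩ := hG.exists_feasibleOrdering hQ.1
  obtain ⟨l', hl', hl'P, hpre⟩ := hG.exists_feasibleOrdering_extending hPF hlQ hQ.2.1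
  obtain rfl := h _ hP l' l hl' hl'P hl rfl
  suffices lQ.toFinset = (c ++ [a]).toFinset from this ▸ ⟨_, hPF, a, haP, hQ⟩
  rcases List.prefix_or_prefix_of_prefix hc hpre with hle | hle
  · exact (hQ.2.2.2 _ (hl.of_prefix hc).toFinset_mem (List.toFinset_subset_toFinset hc.subset)
      (by simp)).antisymm (List.toFinset_subset_toFinset hle.subset)
  · rcases List.prefix_concat_iff.1 hle with rfl | hle
    · rfl
    · exact absurd (hle.subset (List.mem_toFinset.1 hQ.2.2.1)) (hl.notMem_of_concat_prefix hc)

theorem HasUniquePathOrderings.hasPathPrefixes (hG : IsGreedoid F) (hI : LocalInter F)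
    (h : HasUniquePathOrderings F) : HasPathPrefixes F :=
  hasPathPrefixes_iff.2 fun _ hl hP _ _ => h.isPath_of_concat_prefix hG hI hl hP

theorem HasPathPrefixes.concat_prefix_subset (hI : LocalInter F) (h : HasPathPrefixes F)
    {l c : List α} {v : α} (hl : FeasibleOrdering F l) (hP : IsPath F l.toFinset)
    (hc : c ++ [v] <+: l) {V : Finset α} (hV : V ∈ F) (hv : v ∈ V)
    (hlV : Subfeasible F (l.toFinset ∪ V)) : (c ++ [v]).toFinset ⊆ V := by
  obtain ⟨D, -, w, -, hT⟩ := hasPathPrefixes_iff.1 h l hl hP c v hc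
  obtain rfl := hT.eq_of_feasibleOrdering_concat (hl.of_prefix hc) rfl
  obtain ⟨Y, hY, hlVY⟩ := hlV
  refine hT.subset_of_mem hI hV ⟨Y, hY, ?_⟩ hv
  exact (Finset.union_subset_union (List.toFinset_subset_toFinset hc.subset) subset_rfl).trans hlVY

theorem HasPathPrefixes.mem_or_mem (hI : LocalInter F) (h : HasPathPrefixes F) {l : List α}
    (hl : FeasibleOrdering F l) (hP : IsPath F l.toFinset) {x y : α} (hx : x ∈ l) (hy : y ∈ l)
    {X Y : Finset α} (hX : X ∈ F) (hY : Y ∈ F) (hxX : x ∈ X) (hyY : y ∈ Y)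
    (hlX : Subfeasible F (l.toFinset ∪ X)) (hlY : Subfeasible F (l.toFinset ∪ Y)) :
    y ∈ X ∨ x ∈ Y := by
  obtain ⟨cx, hcx⟩ := List.exists_concat_prefix_of_mem hx
  obtain ⟨cy, hcy⟩ := List.exists_concat_prefix_of_mem hy
  rcases List.prefix_or_prefix_of_prefix hcx hcy with hle | hle
  · exact Or.inr (h.concat_prefix_subset hI hl hP hcy hY hyY hlY
      (List.mem_toFinset.2 (hle.subset (by simp))))
  · exact Or.inl (h.concat_prefix_subset hI hl hP hcx hX hxX hlX
      (List.mem_toFinset.2 (hle.subset (by simp))))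

theorem HasPathPrefixes.localForest (hG : IsGreedoid F) (hU : LocalUnion F) (hI : LocalInter F)
    (h : HasPathPrefixes F) : LocalForest F := by
  intro A hA x y z hx hy _ hB
  by_cases hxA : x ∈ insert y A
  · right
    rwa [Finset.insert_eq_of_mem hxA] at hB
  by_cases hyA : y ∈ insert x A
  · left
    rwa [Finset.insert_comm x y, Finset.insert_eq_of_mem hyA] at hB
  set B := insert z (insert x (insert y A))
  have hxB : insert x A ⊆ B :=
    (Finset.insert_subset_insert x (Finset.subset_insert y A)).trans (Finset.subset_insert z _)
  have hyB : insert y A ⊆ B := (Finset.subset_insert x _).trans (Finset.subset_insert z _)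
  obtain ⟨P, hp⟩ := hI.exists_isPathIn hB (Finset.mem_insert_self z _)
  obtain ⟨l, hl, rfl⟩ := hG.exists_feasibleOrdering hp.1
  have hPath : IsPath F l.toFinset := ⟨B, hB, z, Finset.mem_insert_self z _, hp⟩
  obtain ⟨c, rfl⟩ : ∃ c, l = c ++ [z] := by
    rcases List.eq_nil_or_concat' l with rfl | ⟨c, a, rfl⟩
    · simpa using hp.2.2.1
    · exact ⟨c, by rw [hp.eq_of_feasibleOrdering_concat hl rfl]⟩
  have hcB : c.toFinset ⊆ insert x (insert y A) := fun u hu => by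
    have huB : u ∈ B := hp.2.1 (by simpa using Or.inr hu)
    have huz : u ≠ z := fun e =>
      hl.notMem_of_concat_prefix (List.prefix_refl _) (e ▸ by simpa using hu)
    simpa [B, huz] using huB
  by_cases hyc : y ∈ c
  · by_cases hxc : x ∈ c
    · rcases h.mem_or_mem hI hl hPath (by simp [hxc]) (by simp [hyc]) hx hy
        (Finset.mem_insert_self x A) (Finset.mem_insert_self y A)
        ⟨B, hB, Finset.union_subset hp.2.1 hxB⟩ ⟨B, hB, Finset.union_subset hp.2.1 hyB⟩ with
        h' | h'
      · exact absurd h' hyA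
      · exact absurd h' hxA
    · have hcy : c.toFinset ⊆ insert y A := by
        have := Finset.subset_insert_iff.1 hcB
        rwa [Finset.erase_eq_of_notMem (by simpa using hxc)] at this
      exact Or.inr (hU.insert_mem_of_concat hl hy hB (Finset.insert_subset (by simp [B]) hyB) hcy)
  · have hcx : c.toFinset ⊆ insert x A := by
      have := Finset.subset_insert_iff.1 (Finset.insert_comm x y A ▸ hcB)
      rwa [Finset.erase_eq_of_notMem (by simpa using hyc)] at this
    exact Or.inl (hU.insert_mem_of_concat hl hx hB (Finset.insert_subset (by simp [B]) hxB) hcx)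

end

/-- Theorem VII.4.4 (Schmidt): in a local poset greedoid, the local forest property,
uniqueness of feasible orderings of paths, and prefixes-of-path-orderings-are-paths
are equivalent. -/
theorem statement0 (F : Set (Finset α)) (hG : IsGreedoid F)
    (hU : LocalUnion F) (hI : LocalInter F) :
    (LocalForest F ↔
      (∀ P : Finset α, IsPath F P → ∀ l₁ l₂ : List α,
        FeasibleOrdering F l₁ → l₁.toFinset = P →
        FeasibleOrdering F l₂ → l₂.toFinset = P → l₁ = l₂)) ∧
    ((∀ P : Finset α, IsPath F P → ∀ l₁ l₂ : List α,
        FeasibleOrdering F l₁ → l₁.toFinset = P →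
        FeasibleOrdering F l₂ → l₂.toFinset = P → l₁ = l₂) ↔
      (∀ P : Finset α, IsPath F P → ∀ l : List α,
        FeasibleOrdering F l → l.toFinset = P →
        ∀ i : ℕ, 1 ≤ i → i ≤ l.length → IsPath F (l.take i).toFinset)) := by
  have h12 : LocalForest F → HasUniquePathOrderings F := LocalForest.hasUniquePathOrderings hG hU
  have h23 : HasUniquePathOrderings F → HasPathPrefixes F :=
    HasUniquePathOrderings.hasPathPrefixes hG hI
  have h31 : HasPathPrefixes F → LocalForest F := HasPathPrefixes.localForest hG hU hI
  exact ⟨⟨h12, h31 ∘ h23⟩, ⟨h23, h12 ∘ h31⟩⟩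
end

section
/- Let G = (S, 𝓕) be a local forest greedoid, c : S → ℝ a non-negative valued weight function, and define w(A) = Σ_{x ∈ A} c(P_x^A) for every feasible set A ∈ 𝓕, where c(P) denotes Σ_{y ∈ P} c(y). Then every greedy base for minimizing w is a base of G of minimum w-value among all bases. -/
open Finset

variable {α : Type*} [DecidableEq α] [Fintype α]

/-!
Exchange argument along the greedy ordering. Let `A` be a prefix of it, `x` the next greedy
element and `B'` a base containing `A` but not `x`; it suffices to find a base containing
`A ∪ {x}` of no larger weight. If `A ∪ {v, x}` is feasible for some `v ∈ B' \ A`, replace `A` by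
`A ∪ {v}`, where `x` is still a greedy choice. Otherwise `B'` contains exactly one extension `z`
of `A`, `A ∪ {x, z}` is not subfeasible, and `x + (B' - z)` is a base. The local forest property
shows, by induction along paths, that `P_x` together with the part of any path `P_u^{B'}` outside
`A ∪ {z}` is feasible. Every such path contains `P_z`, and `c(P_x) ≤ c(P_z)` by the greedy choice,
so no path of the new base costs more than the corresponding path of `B'`.
-/

section

omit [Fintype α]

variable {F : Set (Finset α)} {P : Finset α → α → Finset α} {c : α → ℝ}

theorem exists_eq_erase_of_subset_of_card_add_one {X Y : Finset α} (hYX : Y ⊆ X)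
    (hcard : Y.card + 1 = X.card) : ∃ q ∈ X, Y = X.erase q := by
  obtain ⟨q, hqX, hqY⟩ := exists_mem_notMem_of_card_lt_card (by omega : Y.card < X.card)
  refine ⟨q, hqX, eq_of_subset_of_card_le (fun y hy => mem_erase.2 ⟨?_, hYX hy⟩) ?_⟩
  · rintro rfl
    exact hqY hy
  · rw [card_erase_of_mem hqX]
    omega

omit [DecidableEq α] in
theorem Subfeasible.mono {X Y : Finset α} (h : Subfeasible F X) (hYX : Y ⊆ X) :
    Subfeasible F Y :=
  let ⟨Z, hZ, hXZ⟩ := h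
  ⟨Z, hZ, hYX.trans hXZ⟩

theorem IsGreedoid.exists_subset_card_eq (hG : IsGreedoid F) {X : Finset α} (hX : X ∈ F) :
    ∀ k ≤ X.card, ∃ Y ∈ F, Y ⊆ X ∧ Y.card = k
  | 0, _ => ⟨∅, hG.1, empty_subset X, card_empty⟩
  | k + 1, hk => by
    obtain ⟨Y, hY, hYX, rfl⟩ := hG.exists_subset_card_eq hX k (by omega)
    obtain ⟨v, hvX, hvY, hvF⟩ := hG.2 Y hY X hX (by omega)
    exact ⟨insert v Y, hvF, insert_subset hvX hYX, card_insert_of_notMem hvY⟩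

theorem IsGreedoid.exists_erase_mem (hG : IsGreedoid F) {X : Finset α} (hX : X ∈ F)
    (hne : X.Nonempty) : ∃ q ∈ X, X.erase q ∈ F := by
  obtain ⟨Y, hY, hYX, hcard⟩ := hG.exists_subset_card_eq hX (X.card - 1) (Nat.sub_le _ _)
  obtain ⟨q, hq, rfl⟩ := exists_eq_erase_of_subset_of_card_add_one hYX
    (by have := hne.card_pos; omega)
  exact ⟨q, hq, hY⟩

theorem IsGreedoid.exists_augment (hG : IsGreedoid F) {X Y : Finset α} (hX : X ∈ F)
    (hY : Y ∈ F) (hXY : X.card ≤ Y.card) :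
    ∃ Z ∈ F, X ⊆ Z ∧ Z ⊆ X ∪ Y ∧ Z.card = Y.card := by
  generalize hn : Y.card - X.card = n
  induction n generalizing X with
  | zero => exact ⟨X, hX, subset_rfl, subset_union_left, by omega⟩
  | succ n ih =>
    obtain ⟨y, hyY, hyX, hyF⟩ := hG.2 X hX Y hY (by omega)
    have hcard := card_insert_of_notMem hyX
    obtain ⟨Z, hZ, hXZ, hZXY, hZc⟩ := ih hyF (by omega) (by omega)
    refine ⟨Z, hZ, (subset_insert y X).trans hXZ, hZXY.trans ?_, hZc⟩
    rw [insert_union]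
    exact insert_subset (mem_union_right X hyY) subset_rfl

theorem IsGreedoid.exists_insert_mem_of_union_mem (hG : IsGreedoid F) {A Q : Finset α}
    (hA : A ∈ F) (hQA : Q ∪ A ∈ F) (hQ : ¬ Q ⊆ A) : ∃ t ∈ Q, t ∉ A ∧ insert t A ∈ F := by
  obtain ⟨t, ht, htA, htF⟩ := hG.2 A hA _ hQA
    (card_lt_card ⟨subset_union_right, fun h => hQ (subset_union_left.trans h)⟩)
  exact ⟨t, (mem_union.1 ht).resolve_right htA, htA, htF⟩

theorem IsGreedoid.insert_erase_mem (hG : IsGreedoid F) {A T : Finset α} {x z : α}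
    (hxz : ¬ Subfeasible F (insert x (insert z A))) (hxA : insert x A ∈ F) (hT : T ∈ F)
    (hzT : insert z A ⊆ T) (hxT : x ∉ T) : insert x (T.erase z) ∈ F := by
  have hzA : z ∉ A := fun hz => hxz ⟨insert x A, hxA, by rw [insert_eq_of_mem hz]⟩
  have hxA' : x ∉ A := fun hx => hxT (hzT (mem_insert_of_mem hx))
  have hzT' : z ∈ T := hzT (mem_insert_self z A)
  obtain ⟨Z, hZ, hxAZ, hZsub, hZcard⟩ := hG.exists_augment hxA hT (by
    rw [card_insert_of_notMem hxA', ← card_insert_of_notMem hzA]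
    exact card_le_card hzT)
  have hzZ : z ∉ Z := fun hz => hxz ⟨Z, hZ, insert_subset (hxAZ (mem_insert_self x A))
    (insert_subset hz ((subset_insert x A).trans hxAZ))⟩
  have hZT : Z ⊆ insert x (T.erase z) := fun y hy => by
    have := hZsub hy
    have : y ≠ z := ne_of_mem_of_not_mem hy hzZ
    grind
  have hcard : (insert x (T.erase z)).card = T.card := by
    rw [card_insert_of_notMem (fun h => hxT (mem_of_mem_erase h)), card_erase_of_mem hzT']
    have := card_pos.2 ⟨z, hzT'⟩
    omega
  rwa [← eq_of_subset_of_card_le hZT (by omega)]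

theorem LocalUnion.biUnion_mem (hU : LocalUnion F) (hG : IsGreedoid F) {ι : Type*}
    [DecidableEq ι] {s : Finset ι} {f : ι → Finset α} (hf : ∀ i ∈ s, f i ∈ F)
    (hs : Subfeasible F (s.biUnion f)) : s.biUnion f ∈ F := by
  induction s using Finset.induction_on with
  | empty => simpa using hG.1
  | insert i s hi ih =>
    rw [biUnion_insert] at hs ⊢
    exact hU _ (hf i (mem_insert_self i s)) _
      (ih (fun j hj => hf j (mem_insert_of_mem hj)) (hs.mono subset_union_right)) hs

theorem IsPathIn.erase_mem (hG : IsGreedoid F) {A Q : Finset α} {t : α}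
    (h : IsPathIn F A t Q) : Q.erase t ∈ F := by
  obtain ⟨hQ, hQA, htQ, hmin⟩ := h
  obtain ⟨q, hqQ, hq⟩ := hG.exists_erase_mem hQ ⟨t, htQ⟩
  obtain rfl : q = t := by
    by_contra hqt
    exact notMem_erase q Q
      (hmin _ hq ((erase_subset q Q).trans hQA) (mem_erase.2 ⟨Ne.symm hqt, htQ⟩) hqQ)
  exact hq

def IsPathMap (F : Set (Finset α)) (P : Finset α → α → Finset α) : Prop :=
  ∀ A ∈ F, ∀ x ∈ A, IsPathIn F A x (P A x)

theorem IsPathMap.subset_erase (hP : IsPathMap F P) (hG : IsGreedoid F) {A : Finset α}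
    {u w : α} (hA : A ∈ F) (hu : u ∈ A) (hw : w ∈ P A u) (hwu : w ≠ u) :
    P A w ⊆ (P A u).erase u :=
  (hP A hA w ((hP A hA u hu).2.1 hw)).2.2.2 _ ((hP A hA u hu).erase_mem hG)
    ((erase_subset u _).trans (hP A hA u hu).2.1) (mem_erase.2 ⟨hwu, hw⟩)

theorem IsPathMap.notMem_of_card_le (hP : IsPathMap F P) (hG : IsGreedoid F) {A : Finset α}
    {w e : α} (hA : A ∈ F) (hw : w ∈ A) (hew : e ≠ w) (hcard : (P A w).card ≤ (P A e).card) :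
    e ∉ P A w := fun he => by
  have := card_le_card (hP.subset_erase hG hA hw he hew)
  have := card_erase_lt_of_mem (hP A hA w hw).2.2.1
  omega

theorem IsPathMap.eq_of_subset (hP : IsPathMap F P) (hI : LocalInter F) {A A' : Finset α}
    {t : α} (hA : A ∈ F) (hA' : A' ∈ F) (hAA' : A ⊆ A') (ht : t ∈ A) : P A' t = P A t := by
  obtain ⟨hQ', hQ'A', htQ', hmin'⟩ := hP A' hA' t (hAA' ht)
  obtain ⟨hQ, hQA, htQ, hmin⟩ := hP A hA t ht
  have hinter : P A' t ∩ A ∈ F := hI _ hQ' _ hA ⟨A', hA', union_subset hQ'A' hAA'⟩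
  have hQ'A : P A' t ⊆ A :=
    (hmin' _ hinter (inter_subset_right.trans hAA') (mem_inter.2 ⟨htQ', ht⟩)).trans
      inter_subset_right
  exact subset_antisymm (hmin' _ hQ (hQA.trans hAA') htQ) (hmin _ hQ' hQ'A htQ')

def pathSum (P : Finset α → α → Finset α) (c : α → ℝ) (A : Finset α) : ℝ :=
  ∑ x ∈ A, ∑ y ∈ P A x, c y

theorem IsPathMap.pathSum_insert (hP : IsPathMap F P) (hI : LocalInter F) {A : Finset α}
    {v : α} (hA : A ∈ F) (hv : v ∉ A) (hvA : insert v A ∈ F) :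
    pathSum P c (insert v A) = pathSum P c A + ∑ y ∈ P (insert v A) v, c y := by
  rw [pathSum, pathSum, sum_insert hv, add_comm]
  congr 1
  exact sum_congr rfl fun t ht => by rw [hP.eq_of_subset hI hA hvA (subset_insert v A) ht]

def IsGreedyChoice (F : Set (Finset α)) (P : Finset α → α → Finset α) (c : α → ℝ)
    (A : Finset α) (x : α) : Prop :=
  ∀ v, v ∉ A → insert v A ∈ F → ∑ y ∈ P (insert x A) x, c y ≤ ∑ y ∈ P (insert v A) v, c y

theorem IsGreedyChoice.mono {A A' : Finset α} {x : α} (hg : IsGreedyChoice F P c A x)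
    (hG : IsGreedoid F) (hU : LocalUnion F) (hI : LocalInter F) (hP : IsPathMap F P)
    (hc : ∀ s, 0 ≤ c s) (hA : A ∈ F) (hxA : insert x A ∈ F) (hAA' : A ⊆ A')
    (hxA' : insert x A' ∈ F) : IsGreedyChoice F P c A' x := by
  intro v hv hvA'
  obtain ⟨hQ, hQA', hvQ, -⟩ := hP _ hvA' v (mem_insert_self v A')
  have hAvA' : A ⊆ insert v A' := hAA'.trans (subset_insert v A')
  obtain ⟨t, htQ, htA, htF⟩ := hG.exists_insert_mem_of_union_mem hA
    (hU _ hQ _ hA ⟨_, hvA', union_subset hQA' hAvA'⟩) (fun h => hv (hAA' (h hvQ)))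
  have htv : P (insert v A') t ⊆ P (insert v A') v :=
    (hP _ hvA' t (hQA' htQ)).2.2.2 _ hQ hQA' htQ
  calc ∑ y ∈ P (insert x A') x, c y
      = ∑ y ∈ P (insert x A) x, c y := by
        rw [hP.eq_of_subset hI hxA hxA' (insert_subset_insert x hAA') (mem_insert_self x A)]
    _ ≤ ∑ y ∈ P (insert t A) t, c y := hg t htA htF
    _ = ∑ y ∈ P (insert v A') t, c y := by
        rw [hP.eq_of_subset hI htF hvA' (insert_subset (hQA' htQ) hAvA') (mem_insert_self t A)]
    _ ≤ ∑ y ∈ P (insert v A') v, c y :=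
        sum_le_sum_of_subset_of_nonneg htv fun s _ _ => hc s

structure Conflict (F : Set (Finset α)) (A B : Finset α) (x z : α) : Prop where
  mem : A ∈ F
  insert_x_mem : insert x A ∈ F
  insert_z_mem : insert z A ∈ F
  base_mem : B ∈ F
  insert_z_subset : insert z A ⊆ B
  x_notMem : x ∉ B
  not_subfeasible : ¬ Subfeasible F (insert x (insert z A))
  eq_z : ∀ w ∈ B, w ∉ A → insert w A ∈ F → w = z

namespace Conflict

variable {A B : Finset α} {x z : α}

theorem z_notMem (h : Conflict F A B x z) : z ∉ A := fun hz =>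
  h.not_subfeasible ⟨insert x A, h.insert_x_mem, by rw [insert_eq_of_mem hz]⟩

theorem subset (h : Conflict F A B x z) : A ⊆ B :=
  (subset_insert z A).trans h.insert_z_subset

theorem z_mem (h : Conflict F A B x z) : z ∈ B :=
  h.insert_z_subset (mem_insert_self z A)

theorem path_z_eq (h : Conflict F A B x z) (hI : LocalInter F) (hP : IsPathMap F P) :
    P B z = P (insert z A) z :=
  hP.eq_of_subset hI h.insert_z_mem h.base_mem h.insert_z_subset (mem_insert_self z A)

theorem insert_union_tail_mem (h : Conflict F A B x z) (hG : IsGreedoid F) (hU : LocalUnion F)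
    {Q : Finset α} (hQ : Q ∈ F) (hQB : Q ⊆ B) : insert x (A ∪ (Q \ insert z A)) ∈ F := by
  have hTB : Q ∪ insert z A ⊆ B := union_subset hQB h.insert_z_subset
  have hT : Q ∪ insert z A ∈ F := hU _ hQ _ h.insert_z_mem ⟨B, h.base_mem, hTB⟩
  have hz := h.z_notMem
  have heq : (Q ∪ insert z A).erase z = A ∪ (Q \ insert z A) := by grind
  rw [← heq]
  exact hG.insert_erase_mem h.not_subfeasible h.insert_x_mem hT subset_union_right
    (fun hx => h.x_notMem (hTB hx))

theorem tail_mem (h : Conflict F A B x z) (hG : IsGreedoid F) (hU : LocalUnion F)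
    (hP : IsPathMap F P) {u : α} (hu : u ∈ B) :
    insert x (A ∪ (P B u \ insert z A)) ∈ F :=
  h.insert_union_tail_mem hG hU (hP B h.base_mem u hu).1 (hP B h.base_mem u hu).2.1

theorem insert_union_erase_notMem (h : Conflict F A B x z) (hG : IsGreedoid F)
    (hP : IsPathMap F P) {u e : α} (hu : u ∈ B) (hue : u ∈ (P B u \ insert z A).erase e)
    (he : e ∈ P B u \ insert z A) : insert x (A ∪ (P B u \ insert z A).erase e) ∉ F := by
  intro hN
  have hz := h.z_notMem
  have hxB := h.x_notMem
  have hEB : P B u \ insert z A ⊆ B := sdiff_subset.trans (hP B h.base_mem u hu).2.1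
  have hxE : x ∉ P B u \ insert z A := fun hx => hxB (hEB hx)
  have hxA : x ∉ A := fun hx => hxB (h.subset hx)
  have hzB := h.z_mem
  have hzx : ¬ Subfeasible F (insert z (insert x A)) := by
    rw [insert_comm]
    exact h.not_subfeasible
  have hM := hG.insert_erase_mem hzx h.insert_z_mem hN
    (insert_subset_insert x subset_union_left) (fun hzN => by grind)
  have heq : (insert x (A ∪ (P B u \ insert z A).erase e)).erase x =
      A ∪ (P B u \ insert z A).erase e := by grind
  rw [heq] at hM
  -- `hM` is a feasible subset of `B` containing `u` but missing `e ∈ P B u`.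
  have hMB : insert z (A ∪ (P B u \ insert z A).erase e) ⊆ B :=
    insert_subset h.z_mem (union_subset h.subset ((erase_subset e _).trans hEB))
  have := (hP B h.base_mem u hu).2.2.2 _ hM hMB (by grind) (mem_sdiff.1 he).1
  grind

theorem insert_union_mem_of_closed (h : Conflict F A B x z) (hG : IsGreedoid F)
    (hU : LocalUnion F) (hP : IsPathMap F P) {u : α} (hu : u ∈ B) {C S : Finset α}
    (hCA : C ⊆ A) (hxC : insert x C ∈ F) (hS : S ⊆ P B u \ insert z A)
    (hclosed : ∀ w ∈ S, P B w \ insert z A ⊆ S)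
    (hIH : ∀ w ∈ S, P (insert x A) x ∪ (P B w \ insert z A) ∈ F) :
    insert x (C ∪ S) ∈ F := by
  have hPx : P (insert x A) x ⊆ insert x C :=
    (hP _ h.insert_x_mem x (mem_insert_self x A)).2.2.2 _ hxC (insert_subset_insert x hCA)
      (mem_insert_self x C)
  have hself : ∀ w ∈ S, w ∈ P B w \ insert z A := fun w hw => by
    have hwB : w ∈ B := (hP B h.base_mem u hu).2.1 (mem_sdiff.1 (hS hw)).1
    exact mem_sdiff.2 ⟨(hP B h.base_mem w hwB).2.2.1, (mem_sdiff.1 (hS hw)).2⟩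
  have heq : insert x (C ∪ S) =
      insert x C ∪ S.biUnion (fun w => P (insert x A) x ∪ (P B w \ insert z A)) := by
    ext y
    simp only [mem_insert, mem_union, mem_biUnion]
    grind
  have hsf : Subfeasible F (insert x (C ∪ S)) :=
    ⟨_, h.tail_mem hG hU hP hu, insert_subset_insert x (union_subset_union hCA hS)⟩
  rw [heq] at hsf ⊢
  exact hU _ hxC _ (hU.biUnion_mem hG hIH (hsf.mono subset_union_right)) hsf

theorem tail_subset_erase (h : Conflict F A B x z) (hG : IsGreedoid F) (hP : IsPathMap F P)
    {u w : α} (hu : u ∈ B) (hw : w ∈ (P B u \ insert z A).erase u) :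
    P B w \ insert z A ⊆ (P B u \ insert z A).erase u := by
  rw [← erase_sdiff_comm]
  exact sdiff_subset_sdiff (hP.subset_erase hG h.base_mem hu
    (mem_sdiff.1 (mem_of_mem_erase hw)).1 (ne_of_mem_erase hw)) subset_rfl

theorem tail_subset_erase_erase (h : Conflict F A B x z) (hG : IsGreedoid F)
    (hP : IsPathMap F P) {u e w : α} (hu : u ∈ B)
    (hmax : ∀ w ∈ (P B u \ insert z A).erase u, (P B w).card ≤ (P B e).card)
    (hw : w ∈ ((P B u \ insert z A).erase u).erase e) :
    P B w \ insert z A ⊆ ((P B u \ insert z A).erase u).erase e := by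
  intro y hy
  refine mem_erase.2 ⟨?_, h.tail_subset_erase hG hP hu (mem_of_mem_erase hw) hy⟩
  rintro rfl
  have hwB : w ∈ B :=
    (hP B h.base_mem u hu).2.1 (mem_sdiff.1 (mem_of_mem_erase (mem_of_mem_erase hw))).1
  exact hP.notMem_of_card_le hG h.base_mem hwB (ne_of_mem_erase hw).symm
    (hmax w (mem_of_mem_erase hw)) (mem_sdiff.1 hy).1

theorem insert_union_singleton_mem (h : Conflict F A B x z) (hG : IsGreedoid F)
    (hU : LocalUnion F) (hLF : LocalForest F) (hP : IsPathMap F P) {u a : α} {C : Finset α}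
    (hu : u ∈ B) (hE : P B u \ insert z A = {u}) (hC : C ∈ F) (hCA : C ⊆ A)
    (hxC : insert x C ∈ F) (ha : a ∈ A) (haC : insert a C ∈ F)
    (hxaC : insert x (insert a C) ∈ F) (hxaCu : insert x (insert a C ∪ {u}) ∈ F) :
    insert x (C ∪ {u}) ∈ F := by
  have huzA : u ∉ insert z A := (mem_sdiff.1 (hE ▸ mem_singleton_self u)).2
  -- Adding `a` and `u` to `C` would make `u ≠ z` an extension of `A` inside `B`.
  rcases hLF C hC a x u haC hxC (by rwa [insert_comm])
      (by convert hxaCu using 1; grind) with hau | hxu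
  · have hsf : Subfeasible F (insert u (insert a C) ∪ A) :=
      ⟨_, h.tail_mem hG hU hP hu, by rw [hE]; grind⟩
    have huA : insert u (insert a C) ∪ A = insert u A := by grind
    have := h.eq_z u hu (fun hu => huzA (mem_insert_of_mem hu))
      (huA ▸ hU _ hau _ h.mem hsf)
    exact absurd (this ▸ mem_insert_self z A) huzA
  · convert hxu using 1
    grind

theorem insert_union_tail_mem_of_max (h : Conflict F A B x z) (hG : IsGreedoid F)
    (hU : LocalUnion F) (hLF : LocalForest F) (hP : IsPathMap F P) {u e a : α} {C : Finset α}
    (hu : u ∈ B) (huE : u ∈ P B u \ insert z A) (he : e ∈ (P B u \ insert z A).erase u)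
    (hmax : ∀ w ∈ (P B u \ insert z A).erase u, (P B w).card ≤ (P B e).card)
    (hIH : ∀ w ∈ (P B u \ insert z A).erase u,
      P (insert x A) x ∪ (P B w \ insert z A) ∈ F)
    (hCA : C ⊆ A) (hxC : insert x C ∈ F) (ha : a ∈ A) (hxaC : insert x (insert a C) ∈ F)
    (hxaCE : insert x (insert a C ∪ (P B u \ insert z A)) ∈ F) :
    insert x (C ∪ (P B u \ insert z A)) ∈ F := by
  set E := P B u \ insert z A
  have hclosed : ∀ w ∈ E.erase u, P B w \ insert z A ⊆ E.erase u := fun w hw =>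
    h.tail_subset_erase hG hP hu hw
  have hclosed' : ∀ w ∈ (E.erase u).erase e, P B w \ insert z A ⊆ (E.erase u).erase e :=
    fun w hw => h.tail_subset_erase_erase hG hP hu hmax hw
  have haCA : insert a C ⊆ A := insert_subset ha hCA
  have fold := fun {C' S : Finset α} (hC'A : C' ⊆ A) (hxC' : insert x C' ∈ F) (hSE : S ⊆ E.erase u)
      (hSc : ∀ w ∈ S, P B w \ insert z A ⊆ S) =>
    h.insert_union_mem_of_closed hG hU hP hu hC'A hxC' (hSE.trans (erase_subset u E)) hSc
      fun w hw => hIH w (hSE hw)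
  have hQ := fold hCA hxC (erase_subset e _) hclosed'
  have hQa := fold haCA hxaC (erase_subset e _) hclosed'
  have hQe := fold hCA hxC subset_rfl hclosed
  have hQae := fold haCA hxaC subset_rfl hclosed
  have h₁ := insert_erase he
  have h₂ := insert_erase huE
  -- Local forest property at `x + (C ∪ (E - u - e))`; adding `a` and `u` contradicts
  -- `insert_union_erase_notMem`.
  rcases hLF _ hQ a e u (by convert hQa using 1; grind) (by convert hQe using 1; grind)
      (by convert hQae using 1; grind) (by convert hxaCE using 1; grind) with hbad | hgood
  · have hsf : Subfeasible F (insert u (insert a (insert x (C ∪ (E.erase u).erase e))) ∪ A) :=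
      ⟨_, h.tail_mem hG hU hP hu, by grind⟩
    have hN := hU _ hbad _ h.mem hsf
    refine absurd ?_ (h.insert_union_erase_notMem hG hP hu (mem_erase.2
      ⟨(ne_of_mem_erase he).symm, huE⟩) (mem_of_mem_erase he))
    convert hN using 1
    grind
  · convert hgood using 1
    grind

theorem insert_union_tail_mem_of_subset (h : Conflict F A B x z) (hG : IsGreedoid F)
    (hU : LocalUnion F) (hLF : LocalForest F) (hP : IsPathMap F P) {u : α} (hu : u ∈ B)
    (huE : u ∈ P B u \ insert z A)
    (hIH : ∀ w ∈ (P B u \ insert z A).erase u,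
      P (insert x A) x ∪ (P B w \ insert z A) ∈ F)
    {C : Finset α} (hC : C ∈ F) (hCA : C ⊆ A) (hxC : insert x C ∈ F) :
    insert x (C ∪ (P B u \ insert z A)) ∈ F := by
  generalize hn : (A \ C).card = n
  induction n generalizing C with
  | zero =>
    obtain rfl : C = A := subset_antisymm hCA (sdiff_eq_empty_iff_subset.1 (card_eq_zero.1 hn))
    exact h.tail_mem hG hU hP hu
  | succ n ih =>
    have hcard := card_sdiff_of_subset hCA
    obtain ⟨a, haA, haC, haF⟩ := hG.2 C hC A h.mem (by omega)
    have hxaC : insert x (insert a C) ∈ F := by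
      have := hU _ hxC _ haF ⟨insert x A, h.insert_x_mem, by grind⟩
      convert this using 1
      grind
    have hxaCE := ih haF (insert_subset haA hCA) hxaC (by
      rw [card_sdiff_of_subset (insert_subset haA hCA), card_insert_of_notMem haC]
      omega)
    by_cases hS : (P B u \ insert z A).erase u = ∅
    · have hE : P B u \ insert z A = {u} := by rw [← insert_erase huE, hS, insert_empty]
      rw [hE] at hxaCE ⊢
      exact h.insert_union_singleton_mem hG hU hLF hP hu hE hC hCA hxC haA haF hxaC hxaCE
    · obtain ⟨e, he, hmax⟩ :=
        exists_max_image _ (fun w => (P B w).card) (nonempty_iff_ne_empty.2 hS)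
      exact h.insert_union_tail_mem_of_max hG hU hLF hP hu huE he hmax hIH hCA hxC haA hxaC
        hxaCE

theorem union_tail_mem (h : Conflict F A B x z) (hG : IsGreedoid F) (hU : LocalUnion F)
    (hLF : LocalForest F) (hP : IsPathMap F P) {u : α} (hu : u ∈ B) (huzA : u ∉ insert z A) :
    P (insert x A) x ∪ (P B u \ insert z A) ∈ F := by
  have hPu := hP B h.base_mem u hu
  have hIH : ∀ w ∈ (P B u \ insert z A).erase u,
      P (insert x A) x ∪ (P B w \ insert z A) ∈ F := by
    intro w hw
    have hwE := mem_of_mem_erase hw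
    have := (card_le_card (hP.subset_erase hG h.base_mem hu (mem_sdiff.1 hwE).1
      (ne_of_mem_erase hw))).trans_lt (card_erase_lt_of_mem hPu.2.2.1)
    exact h.union_tail_mem hG hU hLF hP (hPu.2.1 (mem_sdiff.1 hwE).1) (mem_sdiff.1 hwE).2
  have hPx := hP _ h.insert_x_mem x (mem_insert_self x A)
  have hSxA : (P (insert x A) x).erase x ⊆ A := fun y hy =>
    (mem_insert.1 (hPx.2.1 (mem_of_mem_erase hy))).resolve_left (ne_of_mem_erase hy)
  have := h.insert_union_tail_mem_of_subset hG hU hLF hP hu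
    (mem_sdiff.2 ⟨hPu.2.2.1, huzA⟩) hIH (hPx.erase_mem hG) hSxA
    (by rw [insert_erase hPx.2.2.1]; exact hPx.1)
  rwa [← insert_union, insert_erase hPx.2.2.1] at this
termination_by (P B u).card

theorem z_mem_path (h : Conflict F A B x z) (hG : IsGreedoid F) (hU : LocalUnion F)
    (hP : IsPathMap F P) {t : α} (ht : t ∈ B) (htA : t ∉ A) : z ∈ P B t := by
  obtain ⟨hQ, hQB, htQ, -⟩ := hP B h.base_mem t ht
  obtain ⟨s, hsQ, hsA, hsF⟩ := hG.exists_insert_mem_of_union_mem h.mem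
    (hU _ hQ _ h.mem ⟨B, h.base_mem, union_subset hQB h.subset⟩) (fun hsub => htA (hsub htQ))
  rwa [← h.eq_z s (hQB hsQ) hsA hsF]

theorem subset_erase (h : Conflict F A B x z) : A ⊆ B.erase z := fun _ ha =>
  mem_erase.2 ⟨ne_of_mem_of_not_mem ha h.z_notMem, h.subset ha⟩

theorem sum_path_insert_erase_le (h : Conflict F A B x z) (hG : IsGreedoid F) (hU : LocalUnion F)
    (hI : LocalInter F) (hLF : LocalForest F) (hP : IsPathMap F P) (hc : ∀ s, 0 ≤ c s)
    (hD : insert x (B.erase z) ∈ F) (hxz : ∑ y ∈ P (insert x A) x, c y ≤ ∑ y ∈ P B z, c y)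
    {t : α} (ht : t ∈ B) (htzA : t ∉ insert z A) :
    ∑ y ∈ P (insert x (B.erase z)) t, c y ≤ ∑ y ∈ P B t, c y := by
  have hPt := hP B h.base_mem t ht
  have htz : t ≠ z := fun htz => htzA (htz ▸ mem_insert_self z A)
  have hYD : P (insert x A) x ∪ (P B t \ insert z A) ⊆ insert x (B.erase z) := by
    refine union_subset ((hP _ h.insert_x_mem x (mem_insert_self x A)).2.1.trans
      (insert_subset_insert x h.subset_erase)) fun y hy => ?_
    have := hPt.2.1 (mem_sdiff.1 hy).1
    grind
  have hsub : P (insert x (B.erase z)) t ⊆ P (insert x A) x ∪ (P B t \ insert z A) :=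
    (hP _ hD t (mem_insert_of_mem (mem_erase.2 ⟨htz, ht⟩))).2.2.2 _
      (h.union_tail_mem hG hU hLF hP ht htzA) hYD
      (mem_union_right _ (mem_sdiff.2 ⟨hPt.2.2.1, htzA⟩))
  have hzt : P B z ⊆ P B t ∩ insert z A := by
    refine subset_inter ((hP B h.base_mem z h.z_mem).2.2.2 _ hPt.1 hPt.2.1
      (h.z_mem_path hG hU hP ht fun htA => htzA (mem_insert_of_mem htA))) ?_
    rw [h.path_z_eq hI hP]
    exact (hP _ h.insert_z_mem z (mem_insert_self z A)).2.1
  have hunion := sum_union_inter (s₁ := P (insert x A) x) (s₂ := P B t \ insert z A) (f := c)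
  have hinter : 0 ≤ ∑ y ∈ P (insert x A) x ∩ (P B t \ insert z A), c y :=
    sum_nonneg fun s _ => hc s
  calc ∑ y ∈ P (insert x (B.erase z)) t, c y
      ≤ ∑ y ∈ P (insert x A) x ∪ (P B t \ insert z A), c y :=
        sum_le_sum_of_subset_of_nonneg hsub fun s _ _ => hc s
    _ ≤ ∑ y ∈ P (insert x A) x, c y + ∑ y ∈ P B t \ insert z A, c y := by linarith
    _ ≤ ∑ y ∈ P B t ∩ insert z A, c y + ∑ y ∈ P B t \ insert z A, c y := by
        linarith [sum_le_sum_of_subset_of_nonneg hzt fun s _ _ => hc s]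
    _ = ∑ y ∈ P B t, c y := sum_inter_add_sum_sdiff _ _ _

theorem pathSum_insert_erase_le (h : Conflict F A B x z) (hG : IsGreedoid F)
    (hU : LocalUnion F) (hI : LocalInter F) (hLF : LocalForest F) (hP : IsPathMap F P)
    (hc : ∀ s, 0 ≤ c s) (hg : IsGreedyChoice F P c A x) (hD : insert x (B.erase z) ∈ F) :
    pathSum P c (insert x (B.erase z)) ≤ pathSum P c B := by
  have hxz : ∑ y ∈ P (insert x A) x, c y ≤ ∑ y ∈ P B z, c y := by
    rw [h.path_z_eq hI hP]
    exact hg z h.z_notMem h.insert_z_mem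
  have hterm : ∀ t ∈ B.erase z,
      ∑ y ∈ P (insert x (B.erase z)) t, c y ≤ ∑ y ∈ P B t, c y := by
    intro t ht
    by_cases htA : t ∈ A
    · rw [hP.eq_of_subset hI h.mem hD (h.subset_erase.trans (subset_insert x _)) htA,
        hP.eq_of_subset hI h.mem h.base_mem h.subset htA]
    · exact h.sum_path_insert_erase_le hG hU hI hLF hP hc hD hxz (mem_of_mem_erase ht) (by grind)
  rw [pathSum, sum_insert (fun hx => h.x_notMem (mem_of_mem_erase hx)), pathSum,
    ← add_sum_erase B _ h.z_mem]
  gcongr ?_ + ?_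
  · rw [hP.eq_of_subset hI h.insert_x_mem hD (insert_subset_insert x h.subset_erase)
      (mem_insert_self x A)]
    exact hxz
  · exact sum_le_sum hterm

end Conflict

theorem exists_conflict (hG : IsGreedoid F) (hU : LocalUnion F) {A B : Finset α} {x : α}
    (hA : A ∈ F) (hxA : insert x A ∈ F) (hB : IsBase F B) (hAB : A ⊆ B) (hxB : x ∉ B)
    (hv : ∀ v ∈ B, v ∉ A → insert v A ∈ F → insert x (insert v A) ∉ F) :
    ∃ z, Conflict F A B x z ∧ IsBase F (insert x (B.erase z)) := by
  have hsf : ∀ v ∈ B, v ∉ A → insert v A ∈ F → ¬ Subfeasible F (insert x (insert v A)) := by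
    intro v hvB hvA hvF hsub
    have heq : insert x A ∪ insert v A = insert x (insert v A) := by grind
    exact hv v hvB hvA hvF (heq ▸ hU _ hxA _ hvF (heq ▸ hsub))
  have hxA' : x ∉ A := fun hx => hxB (hAB hx)
  obtain ⟨D, hD, hxAD, hDsub, hDcard⟩ := hG.exists_augment hxA hB.1 (hB.2 _ hxA)
  have hxD : x ∈ D := hxAD (mem_insert_self x A)
  obtain ⟨z, hzB, hDz⟩ := exists_eq_erase_of_subset_of_card_add_one (X := B) (Y := D.erase x)
    (fun y hy => by
      have := hDsub (mem_of_mem_erase hy)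
      have := ne_of_mem_erase hy
      grind)
    (by
      rw [card_erase_of_mem hxD, hDcard]
      have := card_pos.2 ⟨x, hxD⟩
      omega)
  have hDeq : insert x (B.erase z) = D := by rw [← hDz, insert_erase hxD]
  have hAz : A ⊆ B.erase z := hDz ▸ fun a ha =>
    mem_erase.2 ⟨ne_of_mem_of_not_mem ha hxA', hxAD (mem_insert_of_mem ha)⟩
  have hzA : z ∉ A := fun hz => notMem_erase z B (hAz hz)
  have heq : ∀ w ∈ B, w ∉ A → insert w A ∈ F → w = z := by
    intro w hwB hwA hwF
    by_contra hwz
    refine hsf w hwB hwA hwF ⟨D, hD, ?_⟩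
    rw [← hDeq]
    exact insert_subset_insert x (insert_subset (mem_erase.2 ⟨hwz, hwB⟩) hAz)
  have hzF : insert z A ∈ F := by
    obtain ⟨w, hwB, hwA, hwF⟩ := hG.2 A hA B hB.1 (card_lt_card ⟨hAB, fun h => hzA (h hzB)⟩)
    rwa [heq w hwB hwA hwF] at hwF
  refine ⟨z, ⟨hA, hxA, hzF, hB.1, insert_subset hzB hAB, hxB, hsf z hzB hzA hzF, heq⟩, ?_⟩
  rw [hDeq]
  exact ⟨hD, fun C hC => hDcard ▸ hB.2 C hC⟩

theorem exists_base_insert_le (hG : IsGreedoid F) (hU : LocalUnion F) (hI : LocalInter F)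
    (hLF : LocalForest F) (hP : IsPathMap F P) (hc : ∀ s, 0 ≤ c s) {A B : Finset α} {x : α}
    (hA : A ∈ F) (hxA : insert x A ∈ F) (hg : IsGreedyChoice F P c A x) (hB : IsBase F B)
    (hAB : A ⊆ B) : ∃ B', IsBase F B' ∧ insert x A ⊆ B' ∧ pathSum P c B' ≤ pathSum P c B := by
  by_cases hxB : x ∈ B
  · exact ⟨B, hB, insert_subset hxB hAB, le_rfl⟩
  generalize hn : (B \ A).card = n
  induction n generalizing A with
  | zero =>
    obtain rfl : A = B := subset_antisymm hAB (sdiff_eq_empty_iff_subset.1 (card_eq_zero.1 hn))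
    have := hB.2 _ hxA
    rw [card_insert_of_notMem hxB] at this
    omega
  | succ n ih =>
    by_cases hv : ∃ v ∈ B, v ∉ A ∧ insert v A ∈ F ∧ insert x (insert v A) ∈ F
    · obtain ⟨v, hvB, hvA, hvF, hxvF⟩ := hv
      obtain ⟨B', hB', hsub, hle⟩ := ih hvF hxvF
        (hg.mono hG hU hI hP hc hA hxA (subset_insert v A) hxvF) (insert_subset hvB hAB)
        (by rw [sdiff_insert, card_erase_of_mem (mem_sdiff.2 ⟨hvB, hvA⟩), hn]; rfl)
      exact ⟨B', hB', (insert_subset_insert x (subset_insert v A)).trans hsub, hle⟩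
    · push Not at hv
      obtain ⟨z, hconf, hD⟩ := exists_conflict hG hU hA hxA hB hAB hxB hv
      exact ⟨_, hD, insert_subset_insert x hconf.subset_erase,
        hconf.pathSum_insert_erase_le hG hU hI hLF hP hc hg hD.1⟩

theorem List.toFinset_take_add_one (l : List α) {i : ℕ} (hi : i < l.length) :
    (l.take (i + 1)).toFinset = insert l[i] (l.take i).toFinset := by
  rw [List.take_add_one, List.getElem?_eq_getElem hi, List.toFinset_append, union_comm]
  rfl

theorem List.Nodup.getElem_notMem_toFinset_take {l : List α} (hl : l.Nodup) {i : ℕ}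
    (hi : i < l.length) : l[i] ∉ (l.take i).toFinset := by
  have := hl.sublist (List.take_sublist (i + 1) l)
  rw [List.take_add_one, List.getElem?_eq_getElem hi] at this
  exact fun h => (List.nodup_append.1 this).2.2 _ (List.mem_toFinset.1 h) _ (by simp) rfl

theorem pathSum_le_of_take_subset (hG : IsGreedoid F) (hU : LocalUnion F) (hI : LocalInter F)
    (hLF : LocalForest F) (hP : IsPathMap F P) (hc : ∀ s, 0 ≤ c s) {l : List α}
    (hl : FeasibleOrdering F l)
    (hg : ∀ i (hi : i < l.length), IsGreedyChoice F P c (l.take i).toFinset l[i])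
    (hbase : IsBase F l.toFinset) (i : ℕ) {B : Finset α} (hB : IsBase F B)
    (hsub : (l.take i).toFinset ⊆ B) : pathSum P c l.toFinset ≤ pathSum P c B := by
  by_cases hi : i < l.length
  · obtain ⟨B', hB', hsub', hle⟩ := exists_base_insert_le hG hU hI hLF hP hc (hl.2 i)
      (l.toFinset_take_add_one hi ▸ hl.2 (i + 1)) (hg i hi) hB hsub
    exact (pathSum_le_of_take_subset hG hU hI hLF hP hc hl hg hbase (i + 1) hB'
      (l.toFinset_take_add_one hi ▸ hsub')).trans hle
  · rw [List.take_of_length_le (not_lt.1 hi)] at hsub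
    rw [eq_of_subset_of_card_le hsub (hbase.2 B hB.1)]
termination_by l.length - i

end

/-- Boyd's theorem: on a local forest greedoid, the greedy algorithm minimizes
`w(A) = Σ_{x ∈ A} c(P_x^A)` for a non-negative weight function `c`. -/
theorem statement2 (F : Set (Finset α)) (hG : IsGreedoid F)
    (hU : LocalUnion F) (hI : LocalInter F) (hLF : LocalForest F)
    (c : α → ℝ) (hc : ∀ s, 0 ≤ c s)
    (P : Finset α → α → Finset α)
    (hP : ∀ A ∈ F, ∀ x ∈ A, IsPathIn F A x (P A x))
    (w : Finset α → ℝ)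
    (hw : ∀ A ∈ F, w A = ∑ x ∈ A, ∑ y ∈ P A x, c y)
    (B : Finset α) (hB : GreedyMinBase F w B) :
    ∀ B' : Finset α, IsBase F B' → w B ≤ w B' := by
  have hw : ∀ A ∈ F, w A = pathSum P c A := hw
  obtain ⟨hbase, l, hl, rfl, hgreedy⟩ := hB
  have hchoice : ∀ i (hi : i < l.length), IsGreedyChoice F P c (l.take i).toFinset l[i] := by
    intro i hi v hv hvF
    have hxA := l.toFinset_take_add_one hi ▸ hl.2 (i + 1)
    have := hgreedy i hi v ⟨hv, hvF⟩
    rw [List.get_eq_getElem, hw _ hxA, hw _ hvF,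
      IsPathMap.pathSum_insert hP hI (hl.2 i) (hl.1.getElem_notMem_toFinset_take hi) hxA,
      IsPathMap.pathSum_insert hP hI (hl.2 i) hv hvF] at this
    linarith
  intro B' hB'
  rw [hw _ hbase.1, hw _ hB'.1]
  exact pathSum_le_of_take_subset hG hU hI hLF hP hc hl hchoice hbase 0 hB' (by simp)
end

section
/- Let M = (S, 𝓕) be a matroid with rank function r and let P_base(M) denote the polytope spanned by the incidence vectors of all bases of M. Then the up-hull of P_base(M) equals { x ∈ ℝ^S : x(U) ≥ r(S) − r(S \ U) for all U ⊆ S }, where x(U) = Σ_{s ∈ U} x(s). -/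
open Finset

variable {α : Type*} [DecidableEq α] [Fintype α]

/-!
A base `B` satisfies `|B ∩ U| = |B| - |B \ U| ≥ r(S) - r(S \ U)`, and the inequality survives
convex combinations and going up. Conversely, if `x` is not in the up-hull (a closed convex set),
it is strictly separated from it by a linear form `w`, which is nonnegative because the up-hull is
closed under adding nonnegative vectors. A base `B` whose trace on every sublevel set `{w ≤ t}`
spans that set (built greedily in increasing order of `w`) has `|B ∩ {w > t}| = r(S) - r({w ≤ t}) ≤ x({w > t})` for all `t`, so by Abel
summation over the superlevel sets of `w` its weight `w(B)` is at most `w · x`, contradicting the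
separation.
-/

theorem sum_mul_nonneg_of_sum_superlevel_nonneg {ι : Type*} (s : Finset ι) {w c : ι → ℝ}
    (hw : ∀ i ∈ s, 0 ≤ w i) (hc : ∀ t, 0 ≤ t → 0 ≤ ∑ i ∈ s with t < w i, c i) :
    0 ≤ ∑ i ∈ s, w i * c i := by
  classical
  induction s using Finset.strongInduction generalizing w with
  | H s ih =>
  rcases s.eq_empty_or_nonempty with rfl | hne
  · simp
  obtain ⟨a, ha, hmin⟩ := s.exists_min_image w hne
  have hsplit : ∑ i ∈ s, w i * c i =
      w a * ∑ i ∈ s, c i + ∑ i ∈ s.erase a, (w i - w a) * c i := by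
    rw [sum_erase _ (by rw [sub_self, zero_mul]), mul_sum, ← sum_add_distrib]
    exact sum_congr rfl fun i _ => by ring
  have hbottom : 0 ≤ w a * ∑ i ∈ s, c i := by
    rcases (hw a ha).eq_or_lt with h | h
    · rw [← h, zero_mul]
    · have hs := hc 0 le_rfl
      rw [filter_true_of_mem fun i hi => h.trans_le (hmin i hi)] at hs
      exact mul_nonneg h.le hs
  have hlayers : 0 ≤ ∑ i ∈ s.erase a, (w i - w a) * c i := by
    refine ih _ (erase_ssubset ha) (fun i hi => sub_nonneg.2 (hmin i (mem_of_mem_erase hi)))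
      fun t ht => ?_
    have hlevel : {i ∈ s.erase a | t < w i - w a} = {i ∈ s | t + w a < w i} := by
      ext i
      simp only [mem_filter, mem_erase, lt_sub_iff_add_lt]
      refine ⟨fun h => ⟨h.1.2, h.2⟩, fun h => ⟨⟨?_, h.1⟩, h.2⟩⟩
      rintro rfl
      linarith [h.2]
    rw [hlevel]
    exact hc _ (add_nonneg ht (hw a ha))
  linarith

open scoped Pointwise in
theorem exists_mem_convexHull_le_of_forall_weight {ι : Type*} [Fintype ι] {S : Set (ι → ℝ)}
    (hS : S.Finite) {x : ι → ℝ}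
    (h : ∀ w : ι → ℝ, 0 ≤ w → ∃ v ∈ S, ∑ i, w i * v i ≤ ∑ i, w i * x i) :
    ∃ z ∈ convexHull ℝ S, z ≤ x := by
  classical
  by_contra hx
  set K := convexHull ℝ S + Set.Ici (0 : ι → ℝ)
  have hxK : x ∉ K := by
    rintro ⟨z, hz, y, hy, rfl⟩
    exact hx ⟨z, hz, le_add_of_nonneg_right hy⟩
  obtain ⟨f, u, hfx, hfK⟩ := geometric_hahn_banach_point_closed
    ((convex_convexHull ℝ S).add (convex_Ici 0))
    (isClosed_Ici.add_left_of_isCompact (hS.isCompact_convexHull ℝ)) hxK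
  set w : ι → ℝ := fun i => f fun j => if i = j then 1 else 0
  have hf : ∀ v, f v = ∑ i, w i * v i := fun v => by
    rw [← f.coe_coe, LinearMap.pi_apply_eq_sum_univ]
    exact sum_congr rfl fun i _ => mul_comm _ _
  have hfS : ∀ v ∈ S, ∀ y, 0 ≤ y → u < f (v + y) :=
    fun v hv y hy => hfK _ ⟨v, subset_convexHull ℝ S hv, y, hy, rfl⟩
  obtain ⟨v₀, hv₀, -⟩ := h 0 le_rfl
  have hw : ∀ i, 0 ≤ w i := fun i => by
    by_contra! hwi
    have hu : u < f v₀ := by simpa using hfS v₀ hv₀ 0 le_rfl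
    have hray := hfS v₀ hv₀ (((f v₀ - u) / -w i) • fun j => if i = j then 1 else 0)
      (smul_nonneg (div_nonneg (by linarith) (by linarith)) fun j => by split_ifs <;> norm_num)
    rw [map_add, map_smul, smul_eq_mul, div_mul_eq_mul_div, div_neg, mul_div_assoc,
      div_self hwi.ne, mul_one] at hray
    linarith
  obtain ⟨v, hv, hvx⟩ := h w hw
  have hfv := hfS v hv 0 le_rfl
  rw [add_zero, hf] at hfv
  rw [hf] at hfx
  linarith

section Rank

variable {β : Type*} {F : Set (Finset β)}

theorem bddAbove_grank (F : Set (Finset β)) (A : Finset β) :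
    BddAbove {n : ℕ | ∃ X ∈ F, X ⊆ A ∧ X.card = n} :=
  bddAbove_def.2 ⟨A.card, by rintro n ⟨X, -, hXA, rfl⟩; exact card_le_card hXA⟩

theorem card_le_grank {X A : Finset β} (hX : X ∈ F) (hXA : X ⊆ A) : X.card ≤ grank F A :=
  le_csSup (bddAbove_grank F A) ⟨X, hX, hXA, rfl⟩

theorem exists_card_eq_grank (hEmpty : (∅ : Finset β) ∈ F) (A : Finset β) :
    ∃ X ∈ F, X ⊆ A ∧ X.card = grank F A :=
  Nat.sSup_mem (s := {n | ∃ X ∈ F, X ⊆ A ∧ X.card = n})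
    ⟨0, ∅, hEmpty, empty_subset A, card_empty⟩ (bddAbove_grank F A)

theorem grank_empty (hEmpty : (∅ : Finset β) ∈ F) : grank F ∅ = 0 := by
  obtain ⟨X, -, hX, hXc⟩ := exists_card_eq_grank hEmpty ∅
  rw [← hXc, subset_empty.1 hX, card_empty]

theorem grank_insert_le [DecidableEq β] (hEmpty : (∅ : Finset β) ∈ F)
    (hSub : ∀ X ∈ F, ∀ Y : Finset β, Y ⊆ X → Y ∈ F) (a : β) (A : Finset β) :
    grank F (insert a A) ≤ grank F A + 1 := by
  obtain ⟨X, hX, hXA, hXc⟩ := exists_card_eq_grank hEmpty (insert a A)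
  have := card_le_grank (hSub X hX _ (erase_subset a X)) (subset_insert_iff.1 hXA)
  have := pred_card_le_card_erase (s := X) (a := a)
  omega

theorem IsBase.card_eq_grank_univ [Fintype β] (hEmpty : (∅ : Finset β) ∈ F) {B : Finset β}
    (hB : IsBase F B) : B.card = grank F univ := by
  obtain ⟨X, hX, -, hXc⟩ := exists_card_eq_grank hEmpty univ
  exact le_antisymm (card_le_grank hB.1 (subset_univ B)) (hXc ▸ hB.2 X hX)

theorem isBase_of_card_eq_grank_univ [Fintype β] {B : Finset β} (hB : B ∈ F)
    (hcard : B.card = grank F univ) : IsBase F B :=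
  ⟨hB, fun C hC => hcard ▸ card_le_grank hC (subset_univ C)⟩

theorem grank_univ_le_card_inter_add_grank_sdiff [DecidableEq β] [Fintype β]
    (hEmpty : (∅ : Finset β) ∈ F) (hSub : ∀ X ∈ F, ∀ Y : Finset β, Y ⊆ X → Y ∈ F)
    {B : Finset β} (hB : IsBase F B) (U : Finset β) :
    grank F univ ≤ (B ∩ U).card + grank F (univ \ U) := by
  have := card_le_grank (hSub B hB.1 (B \ U) sdiff_subset)
    (sdiff_subset_sdiff (subset_univ B) le_rfl)
  have := card_inter_add_card_sdiff B U
  have := hB.card_eq_grank_univ hEmpty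
  omega

theorem exists_inter_eq_card_eq_grank_insert [DecidableEq β] (hEmpty : (∅ : Finset β) ∈ F)
    (hSub : ∀ X ∈ F, ∀ Y : Finset β, Y ⊆ X → Y ∈ F)
    (hExch : ∀ X ∈ F, ∀ Y ∈ F, X.card < Y.card →
      ∃ y ∈ Y, y ∉ X ∧ insert y X ∈ F)
    {a : β} {A B : Finset β} (ha : a ∉ A) (hB : B ∈ F) (hBA : B ⊆ A)
    (hcard : B.card = grank F A) :
    ∃ B' ∈ F, B' ⊆ insert a A ∧ B' ∩ A = B ∧ B'.card = grank F (insert a A) := by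
  have hBA' : B ∩ A = B := inter_eq_left.2 hBA
  have hle : B.card ≤ grank F (insert a A) := card_le_grank hB (hBA.trans (subset_insert a A))
  rcases hle.eq_or_lt with h | h
  · exact ⟨B, hB, hBA.trans (subset_insert a A), hBA', h⟩
  obtain ⟨X, hX, hXA, hXc⟩ := exists_card_eq_grank hEmpty (insert a A)
  obtain ⟨y, hyX, hyB, hyF⟩ := hExch B hB X hX (hXc ▸ h)
  have hya : y = a := by
    by_contra hya
    have hyA := (mem_insert.1 (hXA hyX)).resolve_left hya
    have := card_le_grank hyF (insert_subset hyA hBA)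
    rw [card_insert_of_notMem hyB] at this
    omega
  subst hya
  refine ⟨insert y B, hyF, insert_subset_insert y hBA,
    by rw [insert_inter_of_notMem ha, hBA'], ?_⟩
  have := grank_insert_le hEmpty hSub y A
  rw [card_insert_of_notMem hyB]
  omega

theorem exists_isBase_card_filter_le_eq_grank [DecidableEq β] [Fintype β]
    (hEmpty : (∅ : Finset β) ∈ F) (hSub : ∀ X ∈ F, ∀ Y : Finset β, Y ⊆ X → Y ∈ F)
    (hExch : ∀ X ∈ F, ∀ Y ∈ F, X.card < Y.card →
      ∃ y ∈ Y, y ∉ X ∧ insert y X ∈ F)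
    (w : β → ℝ) :
    ∃ B, IsBase F B ∧ ∀ t, {i ∈ B | w i ≤ t}.card = grank F {i | w i ≤ t} := by
  suffices key : ∀ s : Finset β, ∃ B ∈ F, B ⊆ s ∧ B.card = grank F s ∧
      ∀ t, {i ∈ B | w i ≤ t}.card = grank F {i ∈ s | w i ≤ t} by
    obtain ⟨B, hB, -, hcard, hlevel⟩ := key univ
    exact ⟨B, isBase_of_card_eq_grank_univ hB hcard, hlevel⟩
  intro s
  induction s using Finset.induction_on_max_value w with
  | empty => exact ⟨∅, hEmpty, empty_subset _, (grank_empty hEmpty).symm,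
      fun t => by simp [grank_empty hEmpty]⟩
  | insert a s ha hmax ih =>
    obtain ⟨B, hB, hBs, hcard, hlevel⟩ := ih
    obtain ⟨B', hB', hB's, hinter, hcard'⟩ :=
      exists_inter_eq_card_eq_grank_insert hEmpty hSub hExch ha hB hBs hcard
    refine ⟨B', hB', hB's, hcard', fun t => ?_⟩
    by_cases hat : w a ≤ t
    · have hle : ∀ i ∈ insert a s, w i ≤ t := fun i hi =>
        (mem_insert.1 hi).elim (· ▸ hat) fun hi => (hmax i hi).trans hat
      rw [filter_true_of_mem hle, filter_true_of_mem fun i hi => hle i (hB's hi), hcard']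
    · have hB'B : {i ∈ B' | w i ≤ t} = {i ∈ B | w i ≤ t} := by
        rw [← hinter]
        ext i
        simp only [mem_filter, mem_inter]
        refine ⟨fun h => ⟨⟨h.1, (mem_insert.1 (hB's h.1)).resolve_left ?_⟩, h.2⟩,
          fun h => ⟨h.1.1, h.2⟩⟩
        rintro rfl
        exact hat h.2
      rw [filter_insert, if_neg hat, hB'B, hlevel]

def baseIndicators [DecidableEq β] (F : Set (Finset β)) : Set (β → ℝ) :=
  {v | ∃ B, IsBase F B ∧ v = fun s => if s ∈ B then 1 else 0}

theorem finite_baseIndicators [DecidableEq β] [Finite β] (F : Set (Finset β)) :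
    (baseIndicators F).Finite :=
  (Set.finite_range fun B : Finset β => fun s => if s ∈ B then (1 : ℝ) else 0).subset
    fun _ ⟨B, _, hv⟩ => ⟨B, hv.symm⟩

theorem sub_grank_le_sum_of_mem_convexHull [DecidableEq β] [Fintype β]
    (hEmpty : (∅ : Finset β) ∈ F) (hSub : ∀ X ∈ F, ∀ Y : Finset β, Y ⊆ X → Y ∈ F)
    {z : β → ℝ} (hz : z ∈ convexHull ℝ (baseIndicators F)) (U : Finset β) :
    (grank F univ : ℝ) - grank F (univ \ U) ≤ ∑ s ∈ U, z s := by
  have hlin : IsLinearMap ℝ fun v : β → ℝ => ∑ s ∈ U, v s :=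
    ⟨fun a b => by simp [sum_add_distrib], fun c a => by simp [mul_sum]⟩
  refine convexHull_min ?_ (convex_halfSpace_ge hlin _) hz
  rintro _ ⟨B, hB, rfl⟩
  have := grank_univ_le_card_inter_add_grank_sdiff hEmpty hSub hB U
  rw [Set.mem_ofPred_eq, sum_boole, filter_mem_eq_inter, inter_comm, sub_le_iff_le_add]
  exact_mod_cast this

theorem exists_isBase_sum_mul_indicator_le [DecidableEq β] [Fintype β]
    (hEmpty : (∅ : Finset β) ∈ F) (hSub : ∀ X ∈ F, ∀ Y : Finset β, Y ⊆ X → Y ∈ F)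
    (hExch : ∀ X ∈ F, ∀ Y ∈ F, X.card < Y.card →
      ∃ y ∈ Y, y ∉ X ∧ insert y X ∈ F)
    {x : β → ℝ}
    (hx : ∀ U : Finset β, (grank F univ : ℝ) - grank F (univ \ U) ≤ ∑ s ∈ U, x s)
    {w : β → ℝ} (hw : 0 ≤ w) :
    ∃ B, IsBase F B ∧ ∑ s, w s * (if s ∈ B then 1 else 0) ≤ ∑ s, w s * x s := by
  obtain ⟨B, hB, hlevel⟩ := exists_isBase_card_filter_le_eq_grank hEmpty hSub hExch w
  refine ⟨B, hB, sub_nonneg.1 ?_⟩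
  simp_rw [← sum_sub_distrib, ← mul_sub]
  refine sum_mul_nonneg_of_sum_superlevel_nonneg univ (fun i _ => hw i) fun t _ => ?_
  have hU := hx {i | t < w i}
  have hcompl : univ \ ({i | t < w i} : Finset β) = ({i | w i ≤ t} : Finset β) := by ext; simp
  have hBsuper : {i ∈ ({i | t < w i} : Finset β) | i ∈ B} = {i ∈ B | t < w i} := by
    ext; simp [and_comm]
  have hsplit := B.card_filter_add_card_filter_not (t < w ·)
  simp only [not_lt, hlevel, hB.card_eq_grank_univ hEmpty] at hsplit
  rw [hcompl, ← hsplit] at hU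
  rw [sum_sub_distrib, sum_boole, hBsuper]
  push_cast at hU
  linarith

end Rank

/-- Reformulation of Edmonds' matroid polytope theorem: the up-hull of the base
polytope of a matroid equals `{x : x(U) ≥ r(S) - r(S \ U) for all U ⊆ S}`. -/
theorem statement3 (F : Set (Finset α)) (hEmpty : (∅ : Finset α) ∈ F)
    (hSub : ∀ X ∈ F, ∀ Y : Finset α, Y ⊆ X → Y ∈ F)
    (hExch : ∀ X ∈ F, ∀ Y ∈ F, X.card < Y.card → ∃ y ∈ Y, y ∉ X ∧ insert y X ∈ F) :
    {x : α → ℝ | ∃ z ∈ convexHull ℝ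
        {v : α → ℝ | ∃ B : Finset α, IsBase F B ∧
          v = fun s => if s ∈ B then (1 : ℝ) else 0},
      z ≤ x} =
    {x : α → ℝ | ∀ U : Finset α,
      (grank F Finset.univ : ℝ) - (grank F (Finset.univ \ U) : ℝ) ≤ ∑ s ∈ U, x s} := by
  ext x
  constructor
  · rintro ⟨z, hz, hzx⟩ U
    exact (sub_grank_le_sum_of_mem_convexHull hEmpty hSub hz U).trans
      (sum_le_sum fun s _ => hzx s)
  · intro hx
    refine exists_mem_convexHull_le_of_forall_weight (finite_baseIndicators F) fun w hw => ?_
    obtain ⟨B, hB, hBw⟩ := exists_isBase_sum_mul_indicator_le hEmpty hSub hExch hx hw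
    exact ⟨_, ⟨B, hB, rfl⟩, hBw⟩
end

section
/- Let G = (S, 𝓕) be a local poset greedoid, A ∈ 𝓕 a feasible set and c : S → ℝ a weight function. Then Σ_{x ∈ A} c(x) · sh_A(x) = Σ_{x ∈ A} c(P_x^A), where c(P) = Σ_{y ∈ P} c(y). -/
open Finset

variable {α : Type*} [DecidableEq α] [Fintype α]

private lemma biUnion_feasible {F : Set (Finset α)} (hG : IsGreedoid F)
    (hU : LocalUnion F) {A : Finset α} (hA : A ∈ F)
    (T : Finset α) (f : α → Finset α) (hf : ∀ x ∈ T, f x ∈ F ∧ f x ⊆ A) :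
    T.biUnion f ∈ F ∧ T.biUnion f ⊆ A := by
  classical
  induction T using Finset.induction_on with
  | empty => simp only [Finset.biUnion_empty]; exact ⟨hG.1, Finset.empty_subset A⟩
  | @insert a T ha ih =>
    have hfa := hf a (mem_insert_self a T)
    obtain ⟨h1, h2⟩ := ih (fun x hx => hf x (mem_insert_of_mem hx))
    rw [Finset.biUnion_insert]
    have hsub : f a ∪ T.biUnion f ⊆ A := union_subset hfa.2 h2
    exact ⟨hU _ hfa.1 _ h1 ⟨A, hA, hsub⟩, hsub⟩

/-- In a local poset greedoid, `Σ_{x ∈ A} c(x)·sh_A(x) = Σ_{x ∈ A} c(P_x^A)`. -/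
theorem statement4 (F : Set (Finset α)) (hG : IsGreedoid F)
    (hU : LocalUnion F) (hI : LocalInter F)
    (A : Finset α) (hA : A ∈ F) (c : α → ℝ)
    (P : Finset α → α → Finset α)
    (hP : ∀ B ∈ F, ∀ x ∈ B, IsPathIn F B x (P B x)) :
    ∑ x ∈ A, c x * ((A.card : ℝ) - (grank F (A.erase x) : ℝ)) =
      ∑ x ∈ A, ∑ y ∈ P A x, c y := by
  classical
  have key : ∀ y ∈ A, (A.card : ℝ) - (grank F (A.erase y) : ℝ)
      = ((A.filter (fun x => y ∈ P A x)).card : ℝ) := by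
    intro y hy
    set M := A.filter (fun x => y ∉ P A x) with hMdef
    have hMsubA : M ⊆ A := filter_subset _ _
    have hMeq : M = M.biUnion (fun x => P A x) := by
      apply Subset.antisymm
      · intro x hx
        exact mem_biUnion.2 ⟨x, hx, (hP A hA x (hMsubA hx)).2.2.1⟩
      · intro z hz
        obtain ⟨x, hxM, hzP⟩ := mem_biUnion.1 hz
        have hxA := hMsubA hxM
        have hPx := hP A hA x hxA
        have hzA : z ∈ A := hPx.2.1 hzP
        have hPz := hP A hA z hzA
        have hsub : P A z ⊆ P A x := hPz.2.2.2 _ hPx.1 hPx.2.1 hzP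
        exact mem_filter.2 ⟨hzA, fun h => (mem_filter.1 hxM).2 (hsub h)⟩
    have hMF : M ∈ F := by
      rw [hMeq]
      exact (biUnion_feasible hG hU hA M _
        (fun x hx => ⟨(hP A hA x (hMsubA hx)).1, (hP A hA x (hMsubA hx)).2.1⟩)).1
    have hMsub : M ⊆ A.erase y := by
      intro x hx
      rw [mem_erase]
      refine ⟨fun hxy => ?_, hMsubA hx⟩
      subst hxy
      exact (mem_filter.1 hx).2 (hP A hA x (hMsubA hx)).2.2.1
    have hbound : ∀ X ∈ F, X ⊆ A.erase y → X ⊆ M := by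
      intro X hXF hXsub x hxX
      have hxA : x ∈ A := mem_of_mem_erase (hXsub hxX)
      have hPx := hP A hA x hxA
      have hPX : P A x ⊆ X := hPx.2.2.2 _ hXF (hXsub.trans (erase_subset _ _)) hxX
      exact mem_filter.2 ⟨hxA, fun h => (mem_erase.1 (hXsub (hPX h))).1 rfl⟩
    have hrank : grank F (A.erase y) = M.card := by
      unfold grank
      have hmem : M.card ∈ {n : ℕ | ∃ X ∈ F, X ⊆ A.erase y ∧ X.card = n} :=
        ⟨M, hMF, hMsub, rfl⟩
      have hub : ∀ n ∈ {n : ℕ | ∃ X ∈ F, X ⊆ A.erase y ∧ X.card = n}, n ≤ M.card := by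
        rintro n ⟨X, hXF, hXs, rfl⟩
        exact card_le_card (hbound X hXF hXs)
      exact le_antisymm (csSup_le ⟨M.card, hmem⟩ hub) (le_csSup ⟨M.card, hub⟩ hmem)
    rw [hrank]
    have hsplit : (A.filter (fun x => y ∈ P A x)).card + M.card = A.card := by
      simpa [hMdef] using
        Finset.card_filter_add_card_filter_not (s := A) (p := fun x => y ∈ P A x)
    have hcast : (A.card : ℝ) = ((A.filter (fun x => y ∈ P A x)).card : ℝ) + M.card := by
      exact_mod_cast hsplit.symm
    rw [hcast]; ring
  calc ∑ x ∈ A, c x * ((A.card : ℝ) - (grank F (A.erase x) : ℝ))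
      = ∑ x ∈ A, c x * ((A.filter (fun z => x ∈ P A z)).card : ℝ) := by
        exact Finset.sum_congr rfl (fun x hx => by rw [key x hx])
    _ = ∑ x ∈ A, ∑ z ∈ A, if x ∈ P A z then c x else 0 := by
        refine Finset.sum_congr rfl (fun x hx => ?_)
        rw [← Finset.sum_filter, Finset.sum_const, nsmul_eq_mul, mul_comm]
    _ = ∑ z ∈ A, ∑ x ∈ A, if x ∈ P A z then c x else 0 := Finset.sum_comm
    _ = ∑ z ∈ A, ∑ x ∈ P A z, c x := by
        refine Finset.sum_congr rfl (fun z hz => ?_)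
        rw [← Finset.sum_filter]
        congr 1
        rw [Finset.filter_mem_eq_inter]
        exact Finset.inter_eq_right.mpr (hP A hA z hz).2.1
end

section
/- (Local supermodularity property.) If G = (S, 𝓕) is a local poset greedoid with rank function r, then r(A) + r(B) ≤ r(A ∪ B) + r(A ∩ B) holds for all A, B ⊆ S such that A ∪ B is subfeasible. -/
open Finset

variable {α : Type*} [DecidableEq α] [Fintype α]

/-- Local supermodularity property of local poset greedoids. -/
theorem statement5 (F : Set (Finset α)) (hG : IsGreedoid F)
    (hU : LocalUnion F) (hI : LocalInter F)
    (A B : Finset α) (h : Subfeasible F (A ∪ B)) :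
    grank F A + grank F B ≤ grank F (A ∪ B) + grank F (A ∩ B) := by
  obtain ⟨Z, hZF, hZ⟩ := h
  have bdd : ∀ C : Finset α, BddAbove {n : ℕ | ∃ X ∈ F, X ⊆ C ∧ X.card = n} := by
    intro C
    exact ⟨C.card, fun n ⟨X, _, hXC, hXn⟩ => hXn ▸ Finset.card_le_card hXC⟩
  have hmem : ∀ C : Finset α, ∃ X ∈ F, X ⊆ C ∧ X.card = grank F C := by
    intro C
    have hne : {n : ℕ | ∃ X ∈ F, X ⊆ C ∧ X.card = n}.Nonempty :=
      ⟨0, ∅, hG.1, Finset.empty_subset C, rfl⟩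
    exact Nat.sSup_mem hne (bdd C)
  have hle : ∀ C X : Finset α, X ∈ F → X ⊆ C → X.card ≤ grank F C := by
    intro C X hX hXC
    exact le_csSup (bdd C) ⟨X, hX, hXC, rfl⟩
  obtain ⟨X, hXF, hXA, hXcard⟩ := hmem A
  obtain ⟨Y, hYF, hYB, hYcard⟩ := hmem B
  have hsub : X ∪ Y ⊆ A ∪ B := Finset.union_subset_union hXA hYB
  have hsf : Subfeasible F (X ∪ Y) := ⟨Z, hZF, hsub.trans hZ⟩
  have h1 : (X ∪ Y).card ≤ grank F (A ∪ B) := hle _ _ (hU X hXF Y hYF hsf) hsub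
  have h2 : (X ∩ Y).card ≤ grank F (A ∩ B) :=
    hle _ _ (hI X hXF Y hYF hsf) (Finset.inter_subset_inter hXA hYB)
  have := Finset.card_union_add_card_inter X Y
  omega
end

section
/- If G = (S, 𝓕) is a local poset greedoid with rank function r, B is a subfeasible set and ∅ ≠ A ⊆ B, then Σ_{x ∈ A} r(B \ {x}) ≤ r(B \ A) + (|A| − 1) · r(B). -/
open Finset

variable {α : Type*} [DecidableEq α] [Fintype α]

lemma grank_bdd (F : Set (Finset α)) (A : Finset α) :
    BddAbove {n : ℕ | ∃ X ∈ F, X ⊆ A ∧ X.card = n} := by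
  refine ⟨A.card, ?_⟩
  rintro n ⟨X, _, hXA, rfl⟩
  exact Finset.card_le_card hXA

lemma le_grank (F : Set (Finset α)) {A X : Finset α} (hX : X ∈ F) (hXA : X ⊆ A) :
    X.card ≤ grank F A :=
  le_csSup (grank_bdd F A) ⟨X, hX, hXA, rfl⟩

lemma grank_exists (F : Set (Finset α)) (h0 : (∅ : Finset α) ∈ F) (A : Finset α) :
    ∃ X ∈ F, X ⊆ A ∧ X.card = grank F A := by
  have hne : {n : ℕ | ∃ X ∈ F, X ⊆ A ∧ X.card = n}.Nonempty :=
    ⟨0, ∅, h0, by simp⟩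
  exact Nat.sSup_mem hne (grank_bdd F A)

lemma grank_supermod (F : Set (Finset α)) (h0 : (∅ : Finset α) ∈ F)
    (hU : LocalUnion F) (hI : LocalInter F) {T C D : Finset α}
    (hT : T ∈ F) (hC : C ⊆ T) (hD : D ⊆ T) :
    grank F C + grank F D ≤ grank F (C ∩ D) + grank F (C ∪ D) := by
  obtain ⟨X, hX, hXC, hXcard⟩ := grank_exists F h0 C
  obtain ⟨Y, hY, hYD, hYcard⟩ := grank_exists F h0 D
  have hsub : Subfeasible F (X ∪ Y) :=
    ⟨T, hT, Finset.union_subset (hXC.trans hC) (hYD.trans hD)⟩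
  have hXY : X ∪ Y ∈ F := hU X hX Y hY hsub
  have hXiY : X ∩ Y ∈ F := hI X hX Y hY hsub
  have h1 : (X ∩ Y).card ≤ grank F (C ∩ D) :=
    le_grank F hXiY (Finset.inter_subset_inter hXC hYD)
  have h2 : (X ∪ Y).card ≤ grank F (C ∪ D) :=
    le_grank F hXY (Finset.union_subset_union hXC hYD)
  have hcard : (X ∪ Y).card + (X ∩ Y).card = X.card + Y.card :=
    Finset.card_union_add_card_inter X Y
  omega

/-- In a local poset greedoid, if `B` is subfeasible and `∅ ≠ A ⊆ B` then
`Σ_{x ∈ A} r(B \ {x}) ≤ r(B \ A) + (|A| - 1)·r(B)`. -/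
theorem statement7 (F : Set (Finset α)) (hG : IsGreedoid F)
    (hU : LocalUnion F) (hI : LocalInter F)
    (B : Finset α) (hB : Subfeasible F B)
    (A : Finset α) (hA : A.Nonempty) (hAB : A ⊆ B) :
    ∑ x ∈ A, grank F (B.erase x) ≤ grank F (B \ A) + (A.card - 1) * grank F B := by
  obtain ⟨T, hT, hBT⟩ := hB
  have h0 : (∅ : Finset α) ∈ F := hG.1
  induction hA using Finset.Nonempty.cons_induction with
  | singleton a =>
    simp only [Finset.sum_singleton, Finset.card_singleton, Nat.sub_self, Nat.zero_mul,
      Nat.add_zero, ← Finset.erase_eq]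
    exact le_rfl
  | cons a s ha hs ih =>
    have haB : a ∈ B := hAB (Finset.mem_cons_self a s)
    have hsB : s ⊆ B := fun x hx => hAB (Finset.mem_cons_of_mem hx)
    have ih' := ih hsB
    have hsup := grank_supermod F h0 hU hI (C := B.erase a) (D := B \ s) hT
      ((Finset.erase_subset a B).trans hBT) ((Finset.sdiff_subset).trans hBT)
    have e1 : B.erase a ∩ (B \ s) = B \ (Finset.cons a s ha) := by
      ext x
      simp only [Finset.mem_inter, Finset.mem_erase, Finset.mem_sdiff, Finset.mem_cons]
      tauto
    have e2 : B.erase a ∪ (B \ s) = B := by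
      ext x
      simp only [Finset.mem_union, Finset.mem_erase, Finset.mem_sdiff]
      constructor
      · tauto
      · intro hx
        by_cases hxs : x ∈ s
        · exact Or.inl ⟨fun h => ha (h ▸ hxs), hx⟩
        · exact Or.inr ⟨hx, hxs⟩
    rw [e1, e2] at hsup
    rw [Finset.sum_cons, Finset.card_cons]
    have hs1 : 1 ≤ s.card := Finset.card_pos.mpr hs
    have key : grank F (B.erase a) + grank F (B \ s) ≤
        grank F (B \ Finset.cons a s ha) + grank F B := hsup
    have : (s.card + 1 - 1) * grank F B = (s.card - 1) * grank F B + grank F B := by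
      have : s.card + 1 - 1 = (s.card - 1) + 1 := by omega
      rw [this, Nat.succ_mul]
    omega
end
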